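/- arXiv:1007.4695 — 6 statements merged into one kernel-verified Lean document; each statement's English description precedes it below -/
import Mathlib

section
/- Let ḡ := m + [m,m]. Then ḡ is an ideal of g, and there exists a unique symmetric bilinear form Q on ḡ such that: Q is invariant, i.e. Q([u,v],w) + Q(v,[u,w]) = 0 for all u,v,w ∈ ḡ; Q(h ∩ ḡ, m) = 0; and Q restricted to m × m equals ⟨,⟩. Moreover this Q is nondegenerate on ḡ (in particular its restriction to h ∩ ḡ is nondegenerate). -/
/-- `gbar g m = m + [m,m]`, the submodule of `g` spanned by `m` together with all
brackets of elements of `m`. -/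
def gbar (g : Type) [LieRing g] [LieAlgebra ℝ g] (m : Submodule ℝ g) : Submodule ℝ g :=
  m ⊔ Submodule.span ℝ {z | ∃ x ∈ m, ∃ y ∈ m, z = ⁅x, y⁆}

/-!
Put `n = h ∩ ḡ`. It is spanned by the components `[x,y]_h` of brackets of `m`, and `ḡ = m ⊕ n`.
Invariance forces `Q([x,y]_h, b) = ⟨[b,x], y⟩` for `b ∈ n`, so `Q` is determined by `⟨,⟩`.
This prescription is well defined: `R(z,w,x,y) = ⟨[[z,w],x]_m, y⟩` satisfies the first Bianchi
identity by Jacobi, and by natural reductivity it equals `⟨[[z,w]_h,x], y⟩ + ⟨[z,w]_m, [x,y]_m⟩`,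
so it is skew in both pairs. Like a curvature tensor it is then symmetric under exchanging the
pairs, and hence so is its first summand. Invariance of the resulting form under `ad m` is checked
directly, and the elements of `g` acting skew-adjointly on the ideal `ḡ` form a Lie subalgebra,
which therefore contains `ḡ`. An element of the radical lies in `h` and acts trivially on `m`;
such elements form an ideal of `g` inside `h`, hence vanish.
-/

open LinearMap (BilinForm)
open TensorProduct

section General

variable {K L : Type*} [Field K] [LieRing L] [LieAlgebra K L]

structure IsReductiveSplitting (h : LieSubalgebra K L) (m : Submodule K L) (ph pm : L →ₗ[K] L) :
    Prop where
  disjoint : Disjoint h.toSubmodule m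
  lie_mem : ∀ a ∈ h, ∀ x ∈ m, ⁅a, x⁆ ∈ m
  ph_mem : ∀ x, ph x ∈ h
  pm_mem : ∀ x, pm x ∈ m
  ph_add_pm : ∀ x, ph x + pm x = x

structure IsNaturallyReductive (h : LieSubalgebra K L) (m : Submodule K L) (pm : L →ₗ[K] L)
    (B : BilinForm K L) : Prop where
  symm : ∀ x ∈ m, ∀ y ∈ m, B x y = B y x
  lie_invariant : ∀ a ∈ h, ∀ y ∈ m, ∀ z ∈ m, B ⁅a, y⁆ z + B y ⁅a, z⁆ = 0
  naturally_reductive : ∀ x ∈ m, ∀ y ∈ m, ∀ z ∈ m, B (pm ⁅x, y⁆) z + B y (pm ⁅x, z⁆) = 0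

namespace IsReductiveSplitting

variable {h : LieSubalgebra K L} {m : Submodule K L} {ph pm : L →ₗ[K] L}

theorem ph_eq_zero (hS : IsReductiveSplitting h m ph pm) {x : L} (hx : x ∈ m) : ph x = 0 := by
  refine Submodule.disjoint_def.mp hS.disjoint _ (hS.ph_mem x) ?_
  rw [eq_sub_of_add_eq (hS.ph_add_pm x)]
  exact m.sub_mem hx (hS.pm_mem x)

theorem pm_eq_self (hS : IsReductiveSplitting h m ph pm) {x : L} (hx : x ∈ m) : pm x = x := by
  simpa [hS.ph_eq_zero hx] using hS.ph_add_pm x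

theorem pm_eq_zero (hS : IsReductiveSplitting h m ph pm) {a : L} (ha : a ∈ h) : pm a = 0 := by
  refine Submodule.disjoint_def.mp hS.disjoint _ ?_ (hS.pm_mem a)
  rw [eq_sub_of_add_eq' (hS.ph_add_pm a)]
  exact h.sub_mem ha (hS.ph_mem a)

theorem ph_eq_self (hS : IsReductiveSplitting h m ph pm) {a : L} (ha : a ∈ h) : ph a = a := by
  simpa [hS.pm_eq_zero ha] using hS.ph_add_pm a

theorem lie_mem_of_mem_of_mem (hS : IsReductiveSplitting h m ph pm) {x a : L} (hx : x ∈ m)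
    (ha : a ∈ h) : ⁅x, a⁆ ∈ m := by
  rw [← lie_skew]
  exact neg_mem (hS.lie_mem a ha x hx)

theorem ph_lie_of_mem (hS : IsReductiveSplitting h m ph pm) {x : L} (hx : x ∈ m) (v : L) :
    ph ⁅x, v⁆ = ph ⁅x, pm v⁆ := by
  conv_lhs => rw [← hS.ph_add_pm v]
  rw [lie_add, map_add, hS.ph_eq_zero (hS.lie_mem_of_mem_of_mem hx (hS.ph_mem v)), zero_add]

theorem pm_lie_of_mem (hS : IsReductiveSplitting h m ph pm) {x : L} (hx : x ∈ m) (v : L) :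
    pm ⁅x, v⁆ = ⁅x, ph v⁆ + pm ⁅x, pm v⁆ := by
  conv_lhs => rw [← hS.ph_add_pm v]
  rw [lie_add, map_add, hS.pm_eq_self (hS.lie_mem_of_mem_of_mem hx (hS.ph_mem v))]

def isotropyKernel (hS : IsReductiveSplitting h m ph pm) : LieIdeal K L where
  carrier := {a | a ∈ h ∧ ∀ x ∈ m, ⁅a, x⁆ = 0}
  add_mem' := fun ⟨ha, ha'⟩ ⟨hb, hb'⟩ =>
    ⟨h.add_mem ha hb, fun x hx => by rw [add_lie, ha' x hx, hb' x hx, add_zero]⟩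
  zero_mem' := ⟨h.zero_mem, fun x _ => zero_lie x⟩
  smul_mem' := fun c _ ⟨ha, ha'⟩ =>
    ⟨h.smul_mem c ha, fun x hx => by rw [smul_lie, ha' x hx, smul_zero]⟩
  lie_mem := by
    rintro c a ⟨ha, ha'⟩
    have hpm : ⁅pm c, a⁆ = 0 := by rw [← lie_skew, ha' _ (hS.pm_mem c), neg_zero]
    rw [← hS.ph_add_pm c, add_lie, hpm, add_zero]
    refine ⟨h.lie_mem (hS.ph_mem c) ha, fun x hx => ?_⟩
    rw [lie_lie, ha' x hx, lie_zero, ha' _ (hS.lie_mem _ (hS.ph_mem c) x hx), sub_zero]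

theorem eq_zero_of_lie_eq_zero (hS : IsReductiveSplitting h m ph pm)
    (heff : ∀ I : LieIdeal K L, (I : Submodule K L) ≤ h.toSubmodule → I = ⊥) {a : L}
    (ha : a ∈ h) (hax : ∀ x ∈ m, ⁅a, x⁆ = 0) : a = 0 := by
  have hI := heff hS.isotropyKernel fun b hb => hb.1
  have : a ∈ hS.isotropyKernel := ⟨ha, hax⟩
  rwa [hI, LieSubmodule.mem_bot] at this

end IsReductiveSplitting

theorem pair_comm_of_bianchi {V K : Type*} [Field K] [NeZero (2 : K)] (R : V → V → V → V → K)
    (skew₁ : ∀ a b c d, R b a c d = -R a b c d) (skew₂ : ∀ a b c d, R a b d c = -R a b c d)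
    (bianchi : ∀ a b c d, R a b c d + R b c a d + R c a b d = 0) (a b c d : V) :
    R a b c d = R c d a b := by
  have h2 : 2 * (R a b c d - R c d a b) = 0 := by
    linear_combination bianchi a b c d + bianchi b c d a - bianchi c d a b - bianchi d a b c
      + skew₂ a b c d - skew₂ b c a d - skew₂ c d a b - skew₁ a c b d + skew₂ a c b d
      - skew₁ b d c a + skew₂ b d a c + skew₂ d a b c
  exact sub_eq_zero.mp ((mul_eq_zero.mp h2).resolve_left two_ne_zero)

def lieSkewSubalgebra (Q : BilinForm K L) (I : Submodule K L) (hI : ∀ c : L, ∀ v ∈ I, ⁅c, v⁆ ∈ I) :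
    LieSubalgebra K L where
  carrier := {u | ∀ v ∈ I, ∀ w ∈ I, Q ⁅u, v⁆ w + Q v ⁅u, w⁆ = 0}
  add_mem' := fun hu hu' v hv w hw => by
    simp only [add_lie, map_add, LinearMap.add_apply]
    linear_combination hu v hv w hw + hu' v hv w hw
  zero_mem' := fun v _ w _ => by simp
  smul_mem' := fun c u hu v hv w hw => by
    simp only [smul_lie, map_smul, LinearMap.smul_apply, smul_eq_mul]
    linear_combination c * hu v hv w hw
  lie_mem' := fun {u u'} hu hu' v hv w hw => by
    simp only [lie_lie, map_sub, LinearMap.sub_apply]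
    linear_combination hu _ (hI u' v hv) w hw - hu' _ (hI u v hv) w hw
      + hu v hv _ (hI u' w hw) - hu' v hv _ (hI u w hw)

theorem exists_bilinForm_apply_eq_of_symm {M V : Type*} [AddCommGroup M] [Module K M]
    [AddCommGroup V] [Module K V] (Λ : M →ₗ[K] V) (μ : M →ₗ[K] V →ₗ[K] K)
    (hμ : ∀ s t, μ s (Λ t) = μ t (Λ s)) :
    ∃ F : BilinForm K V, ∀ s t, F (Λ s) (Λ t) = μ s (Λ t) := by
  obtain ⟨σ₀, hσ₀⟩ := Λ.rangeRestrict.exists_rightInverse_of_surjective Λ.range_rangeRestrict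
  obtain ⟨σ, hσ⟩ := LinearMap.exists_extend σ₀
  have hΛσ : ∀ s, Λ (σ (Λ s)) = Λ s := fun s => by
    have hσs : σ (Λ s) = σ₀ (Λ.rangeRestrict s) := LinearMap.congr_fun hσ (Λ.rangeRestrict s)
    rw [hσs]
    exact congrArg Subtype.val (LinearMap.congr_fun hσ₀ (Λ.rangeRestrict s))
  refine ⟨μ ∘ₗ σ, fun s t => ?_⟩
  rw [LinearMap.comp_apply, hμ, hΛσ, hμ]

variable {h : LieSubalgebra K L} {m : Submodule K L} {ph pm : L →ₗ[K] L} {B : BilinForm K L}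

variable (m) in
def bracketH (ph : L →ₗ[K] L) : m ⊗[K] m →ₗ[K] L :=
  TensorProduct.lift <| LinearMap.mk₂ K (fun x y => ph ⁅(x : L), (y : L)⁆)
    (fun _ _ _ => by simp [add_lie]) (fun _ _ _ => by simp [smul_lie])
    (fun _ _ _ => by simp [lie_add]) (fun _ _ _ => by simp [lie_smul])

variable (m) in
def isotropyPairing (B : BilinForm K L) : m ⊗[K] m →ₗ[K] L →ₗ[K] K :=
  TensorProduct.lift <| LinearMap.mk₂ K (fun x y => -(B.flip y ∘ₗ LieAlgebra.ad K L x))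
    (fun _ _ _ => by ext; simp; ring) (fun _ _ _ => by ext; simp)
    (fun _ _ _ => by ext; simp; ring) (fun _ _ _ => by ext; simp)

@[simp]
theorem bracketH_tmul (x y : m) : bracketH m ph (x ⊗ₜ y) = ph ⁅(x : L), (y : L)⁆ := by
  simp [bracketH]

@[simp]
theorem isotropyPairing_tmul_apply (x y : m) (b : L) :
    isotropyPairing m B (x ⊗ₜ y) b = B ⁅b, (x : L)⁆ y := by
  rw [← lie_skew, map_neg, LinearMap.neg_apply]
  simp [isotropyPairing]

theorem IsReductiveSplitting.bracketH_mem (hS : IsReductiveSplitting h m ph pm)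
    (t : m ⊗[K] m) : bracketH m ph t ∈ h := by
  induction t using TensorProduct.induction_on with
  | zero => rw [map_zero]; exact h.zero_mem
  | tmul x y => rw [bracketH_tmul]; exact hS.ph_mem _
  | add s t hs ht => rw [map_add]; exact h.add_mem hs ht

theorem IsNaturallyReductive.apply_pm_lie_lie (hS : IsReductiveSplitting h m ph pm)
    (hB : IsNaturallyReductive h m pm B) (z w : L) {x y : L} (hx : x ∈ m) (hy : y ∈ m) :
    B (pm ⁅⁅z, w⁆, x⁆) y = B ⁅ph ⁅z, w⁆, x⁆ y + B (pm ⁅z, w⁆) (pm ⁅x, y⁆) := by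
  have hNR := hB.naturally_reductive x hx _ (hS.pm_mem ⁅z, w⁆) y hy
  have hsplit : pm ⁅⁅z, w⁆, x⁆ = ⁅ph ⁅z, w⁆, x⁆ - pm ⁅x, pm ⁅z, w⁆⁆ := by
    conv_lhs => rw [← hS.ph_add_pm ⁅z, w⁆]
    rw [add_lie, map_add, hS.pm_eq_self (hS.lie_mem _ (hS.ph_mem ⁅z, w⁆) x hx),
      ← lie_skew (pm ⁅z, w⁆) x, map_neg, sub_eq_add_neg]
  rw [hsplit, map_sub, LinearMap.sub_apply]
  linear_combination -hNR

theorem IsNaturallyReductive.apply_lie_ph_lie_comm [NeZero (2 : K)]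
    (hS : IsReductiveSplitting h m ph pm) (hB : IsNaturallyReductive h m pm B) (x y z w : m) :
    B ⁅ph ⁅(z : L), w⁆, x⁆ y = B ⁅ph ⁅(x : L), y⁆, z⁆ w := by
  let R : m → m → m → m → K := fun z w x y => B (pm ⁅⁅(z : L), (w : L)⁆, (x : L)⁆) y
  have hR : ∀ z w x y : m,
      R z w x y = B ⁅ph ⁅(z : L), w⁆, x⁆ y + B (pm ⁅(z : L), w⁆) (pm ⁅(x : L), y⁆) :=
    fun z w x y => hB.apply_pm_lie_lie hS z w x.2 y.2
  have skew₁ : ∀ z w x y, R w z x y = -R z w x y := fun z w x y => by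
    simp only [R]
    rw [← lie_skew (z : L) (w : L), neg_lie, map_neg, map_neg, LinearMap.neg_apply, neg_neg]
  have skew₂ : ∀ z w x y, R z w y x = -R z w x y := fun z w x y => by
    have hinv := hB.lie_invariant _ (hS.ph_mem ⁅(z : L), w⁆) x x.2 y y.2
    have hsymm := hB.symm x x.2 _ (hS.lie_mem _ (hS.ph_mem ⁅(z : L), w⁆) y y.2)
    rw [hR, hR, ← lie_skew (y : L) (x : L), map_neg, map_neg]
    linear_combination hinv - hsymm
  have bianchi : ∀ z w x y, R z w x y + R w x z y + R x z w y = 0 := fun z w x y => by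
    have hJ := lie_jacobi (x : L) (z : L) (w : L)
    rw [← neg_eq_zero, neg_add, neg_add, lie_skew, lie_skew, lie_skew] at hJ
    simpa only [map_add, LinearMap.add_apply, map_zero, LinearMap.zero_apply] using
      congrArg (fun v => B (pm v) (y : L)) hJ
  have hpair := pair_comm_of_bianchi R skew₁ skew₂ bianchi z w x y
  rw [hR, hR, hB.symm _ (hS.pm_mem _) _ (hS.pm_mem _)] at hpair
  exact add_right_cancel hpair

theorem isotropyPairing_bracketH_comm [NeZero (2 : K)] (hS : IsReductiveSplitting h m ph pm)
    (hB : IsNaturallyReductive h m pm B) (s t : m ⊗[K] m) :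
    isotropyPairing m B s (bracketH m ph t) = isotropyPairing m B t (bracketH m ph s) := by
  have hflip : ((isotropyPairing m B).compl₂ (bracketH m ph)).flip =
      (isotropyPairing m B).compl₂ (bracketH m ph) :=
    TensorProduct.ext' fun z w => TensorProduct.ext' fun x y => by
      simp only [LinearMap.flip_apply, LinearMap.compl₂_apply, bracketH_tmul,
        isotropyPairing_tmul_apply]
      exact hB.apply_lie_ph_lie_comm hS x y z w
  exact LinearMap.congr_fun₂ hflip t s

variable (m ph B) in
structure IsKostantForm (Q : BilinForm K L) : Prop where
  apply_of_mem : ∀ x ∈ m, ∀ y ∈ m, Q x y = B x y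
  bracketH_apply : ∀ t, ∀ x ∈ m, Q (bracketH m ph t) x = 0
  apply_bracketH : ∀ x ∈ m, ∀ t, Q x (bracketH m ph t) = 0
  bracketH_apply_bracketH :
    ∀ s t, Q (bracketH m ph s) (bracketH m ph t) = isotropyPairing m B s (bracketH m ph t)

theorem exists_isKostantForm [NeZero (2 : K)] (hS : IsReductiveSplitting h m ph pm)
    (hB : IsNaturallyReductive h m pm B) : ∃ Q, IsKostantForm m ph B Q := by
  obtain ⟨F, hF⟩ := exists_bilinForm_apply_eq_of_symm (bracketH m ph) (isotropyPairing m B)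
    (isotropyPairing_bracketH_comm hS hB)
  have hph t := hS.ph_eq_self (hS.bracketH_mem t)
  have hpm t := hS.pm_eq_zero (hS.bracketH_mem t)
  refine ⟨B.compl₁₂ pm pm + F.compl₁₂ ph ph, ⟨?_, ?_, ?_, ?_⟩⟩
  · intro x hx y hy
    simp [hS.pm_eq_self hx, hS.pm_eq_self hy, hS.ph_eq_zero hx]
  · intro t x hx
    simp [hpm t, hS.ph_eq_zero hx]
  · intro x hx t
    simp [hpm t, hS.ph_eq_zero hx]
  · intro s t
    simp [hph, hpm, hF]

theorem IsKostantForm.bracketH_apply_bracketH' [NeZero (2 : K)]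
    (hS : IsReductiveSplitting h m ph pm) (hB : IsNaturallyReductive h m pm B)
    {Q : BilinForm K L} (hQ : IsKostantForm m ph B Q) (s t : m ⊗[K] m) :
    Q (bracketH m ph s) (bracketH m ph t) = isotropyPairing m B t (bracketH m ph s) := by
  rw [hQ.bracketH_apply_bracketH, isotropyPairing_bracketH_comm hS hB]

end General

section Real

variable {g : Type} [LieRing g] [LieAlgebra ℝ g] {h : LieSubalgebra ℝ g} {m : Submodule ℝ g}
  {ph pm : g →ₗ[ℝ] g} {B Q : BilinForm ℝ g}

theorem mem_gbar_of_mem {x : g} (hx : x ∈ m) : x ∈ gbar g m :=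
  le_sup_left (a := m) hx

theorem lie_mem_gbar_of_mem_of_mem {x y : g} (hx : x ∈ m) (hy : y ∈ m) : ⁅x, y⁆ ∈ gbar g m :=
  le_sup_right (a := m) (Submodule.subset_span ⟨x, hx, y, hy, rfl⟩)

theorem lie_mem_gbar_of_mem (hS : IsReductiveSplitting h m ph pm) (c : g) {x : g} (hx : x ∈ m) :
    ⁅c, x⁆ ∈ gbar g m := by
  rw [← hS.ph_add_pm c, add_lie]
  exact add_mem (mem_gbar_of_mem (hS.lie_mem _ (hS.ph_mem c) x hx))
    (lie_mem_gbar_of_mem_of_mem (hS.pm_mem c) hx)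

theorem lie_mem_gbar (hS : IsReductiveSplitting h m ph pm) (c : g) {y : g} (hy : y ∈ gbar g m) :
    ⁅c, y⁆ ∈ gbar g m := by
  suffices gbar g m ≤ (gbar g m).comap (LieAlgebra.ad ℝ g c) from this hy
  refine sup_le (fun x hx => lie_mem_gbar_of_mem hS c hx) (Submodule.span_le.mpr ?_)
  rintro _ ⟨x, hx, y, hy, rfl⟩
  change ⁅c, ⁅x, y⁆⁆ ∈ gbar g m
  rw [leibniz_lie, ← lie_skew x]
  exact add_mem (lie_mem_gbar_of_mem hS _ hy) (neg_mem (lie_mem_gbar_of_mem hS _ hx))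

theorem bracketH_mem_gbar (hS : IsReductiveSplitting h m ph pm) (t : m ⊗[ℝ] m) :
    bracketH m ph t ∈ gbar g m := by
  induction t using TensorProduct.induction_on with
  | zero => rw [map_zero]; exact zero_mem _
  | tmul x y =>
    rw [bracketH_tmul, eq_sub_of_add_eq (hS.ph_add_pm _)]
    exact sub_mem (lie_mem_gbar_of_mem_of_mem x.2 y.2) (mem_gbar_of_mem (hS.pm_mem _))
  | add s t hs ht => rw [map_add]; exact add_mem hs ht

theorem ph_mem_range_of_mem_gbar (hS : IsReductiveSplitting h m ph pm) {u : g}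
    (hu : u ∈ gbar g m) : ph u ∈ LinearMap.range (bracketH m ph) := by
  suffices gbar g m ≤ (LinearMap.range (bracketH m ph)).comap ph from this hu
  refine sup_le (fun x hx => ?_) (Submodule.span_le.mpr ?_)
  · simp [hS.ph_eq_zero hx]
  · rintro _ ⟨x, hx, y, hy, rfl⟩
    exact ⟨⟨x, hx⟩ ⊗ₜ ⟨y, hy⟩, bracketH_tmul _ _⟩

theorem inf_gbar_eq_range_bracketH (hS : IsReductiveSplitting h m ph pm) :
    h.toSubmodule ⊓ gbar g m = LinearMap.range (bracketH m ph) := by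
  refine le_antisymm (fun a ha => ?_) ?_
  · rw [← hS.ph_eq_self ha.1]
    exact ph_mem_range_of_mem_gbar hS ha.2
  · rintro _ ⟨t, rfl⟩
    exact ⟨hS.bracketH_mem t, bracketH_mem_gbar hS t⟩

namespace IsKostantForm

theorem apply_eq_add (hS : IsReductiveSplitting h m ph pm) (hQ : IsKostantForm m ph B Q)
    {u v : g} (hu : u ∈ gbar g m) (hv : v ∈ gbar g m) :
    Q u v = B (pm u) (pm v) + Q (ph u) (ph v) := by
  obtain ⟨s, hs⟩ := ph_mem_range_of_mem_gbar hS hu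
  obtain ⟨t, ht⟩ := ph_mem_range_of_mem_gbar hS hv
  conv_lhs => rw [← hS.ph_add_pm u, ← hS.ph_add_pm v]
  simp only [map_add, LinearMap.add_apply]
  rw [← hs, ← ht, hQ.bracketH_apply s _ (hS.pm_mem v), hQ.apply_bracketH _ (hS.pm_mem u) t,
    hQ.apply_of_mem _ (hS.pm_mem u) _ (hS.pm_mem v)]
  ring

theorem apply_eq_apply (hS : IsReductiveSplitting h m ph pm) {Q' : BilinForm ℝ g}
    (hQ : IsKostantForm m ph B Q) (hQ' : IsKostantForm m ph B Q') {u v : g}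
    (hu : u ∈ gbar g m) (hv : v ∈ gbar g m) : Q u v = Q' u v := by
  obtain ⟨s, hs⟩ := ph_mem_range_of_mem_gbar hS hu
  obtain ⟨t, ht⟩ := ph_mem_range_of_mem_gbar hS hv
  rw [hQ.apply_eq_add hS hu hv, hQ'.apply_eq_add hS hu hv, ← hs, ← ht,
    hQ.bracketH_apply_bracketH, hQ'.bracketH_apply_bracketH]

theorem symm (hS : IsReductiveSplitting h m ph pm) (hB : IsNaturallyReductive h m pm B)
    (hQ : IsKostantForm m ph B Q) {u v : g} (hu : u ∈ gbar g m) (hv : v ∈ gbar g m) :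
    Q u v = Q v u := by
  obtain ⟨s, hs⟩ := ph_mem_range_of_mem_gbar hS hu
  obtain ⟨t, ht⟩ := ph_mem_range_of_mem_gbar hS hv
  rw [hQ.apply_eq_add hS hu hv, hQ.apply_eq_add hS hv hu, hB.symm _ (hS.pm_mem u) _ (hS.pm_mem v),
    ← hs, ← ht, hQ.bracketH_apply_bracketH' hS hB, hQ.bracketH_apply_bracketH]

theorem lie_invariant_of_mem (hS : IsReductiveSplitting h m ph pm)
    (hB : IsNaturallyReductive h m pm B) (hQ : IsKostantForm m ph B Q) {x v w : g} (hx : x ∈ m)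
    (hv : v ∈ gbar g m) (hw : w ∈ gbar g m) : Q ⁅x, v⁆ w + Q v ⁅x, w⁆ = 0 := by
  obtain ⟨s, hs⟩ := ph_mem_range_of_mem_gbar hS hv
  obtain ⟨t, ht⟩ := ph_mem_range_of_mem_gbar hS hw
  have hxv : ph ⁅x, v⁆ = bracketH m ph (⟨x, hx⟩ ⊗ₜ ⟨pm v, hS.pm_mem v⟩) := by
    rw [hS.ph_lie_of_mem hx, bracketH_tmul]
  have hxw : ph ⁅x, w⁆ = bracketH m ph (⟨x, hx⟩ ⊗ₜ ⟨pm w, hS.pm_mem w⟩) := by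
    rw [hS.ph_lie_of_mem hx, bracketH_tmul]
  have hNR := hB.naturally_reductive x hx _ (hS.pm_mem v) _ (hS.pm_mem w)
  have hsymm := hB.symm _ (hS.lie_mem _ (hS.ph_mem w) x hx) _ (hS.pm_mem v)
  rw [hQ.apply_eq_add hS (lie_mem_gbar hS x hv) hw, hQ.apply_eq_add hS hv (lie_mem_gbar hS x hw),
    hS.pm_lie_of_mem hx v, hS.pm_lie_of_mem hx w, hxv, hxw, ← hs, ← ht,
    hQ.bracketH_apply_bracketH, hQ.bracketH_apply_bracketH' hS hB, isotropyPairing_tmul_apply,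
    isotropyPairing_tmul_apply, hs, ht, ← lie_skew x (ph v), ← lie_skew x (ph w)]
  simp only [map_add, map_neg, LinearMap.add_apply, LinearMap.neg_apply]
  linear_combination hNR + hsymm

theorem lie_invariant (hS : IsReductiveSplitting h m ph pm) (hB : IsNaturallyReductive h m pm B)
    (hQ : IsKostantForm m ph B Q) {u v w : g} (hu : u ∈ gbar g m) (hv : v ∈ gbar g m)
    (hw : w ∈ gbar g m) : Q ⁅u, v⁆ w + Q v ⁅u, w⁆ = 0 := by
  suffices gbar g m ≤ (lieSkewSubalgebra Q (gbar g m) (lie_mem_gbar hS)).toSubmodule from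
    this hu v hv w hw
  refine sup_le (fun x hx => fun v hv w hw => hQ.lie_invariant_of_mem hS hB hx hv hw)
    (Submodule.span_le.mpr ?_)
  rintro _ ⟨x, hx, y, hy, rfl⟩
  exact LieSubalgebra.lie_mem _ (fun v hv w hw => hQ.lie_invariant_of_mem hS hB hx hv hw)
    (fun v hv w hw => hQ.lie_invariant_of_mem hS hB hy hv hw)

theorem apply_eq_zero_of_mem_inf (hS : IsReductiveSplitting h m ph pm)
    (hQ : IsKostantForm m ph B Q) {a x : g} (ha : a ∈ h.toSubmodule ⊓ gbar g m) (hx : x ∈ m) :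
    Q a x = 0 := by
  obtain ⟨t, rfl⟩ := (inf_gbar_eq_range_bracketH hS).le ha
  exact hQ.bracketH_apply t x hx

theorem eq_zero_of_forall_mem_gbar (hS : IsReductiveSplitting h m ph pm)
    (hB : IsNaturallyReductive h m pm B) (hBnd : ∀ x ∈ m, (∀ y ∈ m, B x y = 0) → x = 0)
    (heff : ∀ I : LieIdeal ℝ g, (I : Submodule ℝ g) ≤ h.toSubmodule → I = ⊥)
    (hQ : IsKostantForm m ph B Q) {u : g} (hu : u ∈ gbar g m)
    (h0 : ∀ v ∈ gbar g m, Q u v = 0) : u = 0 := by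
  have hpm : pm u = 0 := hBnd _ (hS.pm_mem u) fun y hy => by
    simpa [hQ.apply_eq_add hS hu (mem_gbar_of_mem hy), hS.pm_eq_self hy, hS.ph_eq_zero hy] using
      h0 y (mem_gbar_of_mem hy)
  obtain ⟨s, hs⟩ := ph_mem_range_of_mem_gbar hS hu
  have hph : ph u = 0 := hS.eq_zero_of_lie_eq_zero heff (hS.ph_mem u) fun x hx =>
    hBnd _ (hS.lie_mem _ (hS.ph_mem u) x hx) fun y hy => by
      have hxy := bracketH_mem_gbar hS (⟨x, hx⟩ ⊗ₜ[ℝ] ⟨y, hy⟩)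
      have := h0 _ hxy
      rwa [hQ.apply_eq_add hS hu hxy, hpm, map_zero, LinearMap.zero_apply, zero_add,
        hS.ph_eq_self (hS.bracketH_mem _), ← hs, hQ.bracketH_apply_bracketH' hS hB,
        isotropyPairing_tmul_apply, hs] at this
  rw [← hS.ph_add_pm u, hph, hpm, add_zero]

theorem eq_zero_of_forall_mem_inf (hS : IsReductiveSplitting h m ph pm)
    (hB : IsNaturallyReductive h m pm B) (hBnd : ∀ x ∈ m, (∀ y ∈ m, B x y = 0) → x = 0)
    (heff : ∀ I : LieIdeal ℝ g, (I : Submodule ℝ g) ≤ h.toSubmodule → I = ⊥)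
    (hQ : IsKostantForm m ph B Q) {a : g} (ha : a ∈ h.toSubmodule ⊓ gbar g m)
    (h0 : ∀ b ∈ h.toSubmodule ⊓ gbar g m, Q a b = 0) : a = 0 := by
  refine hQ.eq_zero_of_forall_mem_gbar hS hB hBnd heff ha.2 fun v hv => ?_
  rw [hQ.apply_eq_add hS ha.2 hv, hS.pm_eq_zero ha.1, map_zero, LinearMap.zero_apply, zero_add,
    hS.ph_eq_self ha.1]
  exact h0 _ ((inf_gbar_eq_range_bracketH hS).ge (ph_mem_range_of_mem_gbar hS hv))

theorem of_lie_invariant (hS : IsReductiveSplitting h m ph pm)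
    (hBsymm : ∀ x ∈ m, ∀ y ∈ m, B x y = B y x)
    (hsymm : ∀ u ∈ gbar g m, ∀ v ∈ gbar g m, Q u v = Q v u)
    (hinv : ∀ u ∈ gbar g m, ∀ v ∈ gbar g m, ∀ w ∈ gbar g m, Q ⁅u, v⁆ w + Q v ⁅u, w⁆ = 0)
    (horth : ∀ a ∈ h.toSubmodule ⊓ gbar g m, ∀ x ∈ m, Q a x = 0)
    (heq : ∀ x ∈ m, ∀ y ∈ m, Q x y = B x y) : IsKostantForm m ph B Q := by
  have hΛ t : bracketH m ph t ∈ h.toSubmodule ⊓ gbar g m :=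
    (inf_gbar_eq_range_bracketH hS).ge ⟨t, rfl⟩
  have hm_orth : ∀ x ∈ m, ∀ t, Q x (bracketH m ph t) = 0 := fun x hx t => by
    rw [hsymm _ (mem_gbar_of_mem hx) _ (hΛ t).2]
    exact horth _ (hΛ t) x hx
  refine ⟨heq, fun t x hx => horth _ (hΛ t) x hx, hm_orth, fun s t => ?_⟩
  suffices Q.flip (bracketH m ph t) ∘ₗ bracketH m ph =
      (isotropyPairing m B).flip (bracketH m ph t) from LinearMap.congr_fun this s
  refine TensorProduct.ext' fun x y => ?_
  have hxb := hS.lie_mem_of_mem_of_mem x.2 (hΛ t).1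
  have h1 := hinv x (mem_gbar_of_mem x.2) y (mem_gbar_of_mem y.2) _ (hΛ t).2
  have h2 : Q (pm ⁅(x : g), (y : g)⁆) (bracketH m ph t) = 0 := hm_orth _ (hS.pm_mem _) t
  have h3 := heq y y.2 _ hxb
  have h4 := hBsymm y y.2 _ hxb
  simp only [LinearMap.comp_apply, LinearMap.flip_apply, LinearMap.BilinForm.flip_apply,
    bracketH_tmul, isotropyPairing_tmul_apply]
  rw [eq_sub_of_add_eq (hS.ph_add_pm _), map_sub, LinearMap.sub_apply, h2,
    ← lie_skew (bracketH m ph t) (x : g), map_neg, LinearMap.neg_apply]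
  linear_combination h1 - h3 - h4

end IsKostantForm

end Real

theorem kostant_pseudo_riemannian_general
    (g : Type) [LieRing g] [LieAlgebra ℝ g]
    (h : LieSubalgebra ℝ g) (m : Submodule ℝ g)
    -- the action is almost effective: h contains no nonzero ideal of g
    (heff : ∀ I : LieIdeal ℝ g, (I : Submodule ℝ g) ≤ h.toSubmodule → I = ⊥)
    -- g = h ⊕ m as vector spaces
    (hcompl : IsCompl h.toSubmodule m)
    -- [h,m] ⊆ m
    (hred : ∀ a ∈ h, ∀ x ∈ m, ⁅a, x⁆ ∈ m)
    -- projections onto the h- and m-components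
    (ph pm : g →ₗ[ℝ] g)
    (hph : ∀ x, ph x ∈ h.toSubmodule) (hpm : ∀ x, pm x ∈ m)
    (hdecomp : ∀ x, ph x + pm x = x)
    -- the metric ⟨,⟩ on m
    (B : LinearMap.BilinForm ℝ g)
    (hBsymm : ∀ x ∈ m, ∀ y ∈ m, B x y = B y x)
    (hBnd : ∀ x ∈ m, (∀ y ∈ m, B x y = 0) → x = 0)
    -- Ad(H)-invariance (infinitesimally): ⟨[a,y],z⟩ + ⟨y,[a,z]⟩ = 0 for a ∈ h
    (hinv : ∀ a ∈ h, ∀ y ∈ m, ∀ z ∈ m, B ⁅a, y⁆ z + B y ⁅a, z⁆ = 0)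
    -- natural reductivity: ⟨[x,y]_m,z⟩ + ⟨y,[x,z]_m⟩ = 0 for x,y,z ∈ m
    (hnr : ∀ x ∈ m, ∀ y ∈ m, ∀ z ∈ m, B (pm ⁅x, y⁆) z + B y (pm ⁅x, z⁆) = 0) :
    -- ḡ is an ideal of g
    (∀ x : g, ∀ y ∈ gbar g m, ⁅x, y⁆ ∈ gbar g m) ∧
    -- existence of Q ...
    ∃ Q : LinearMap.BilinForm ℝ g,
      ((∀ u ∈ gbar g m, ∀ v ∈ gbar g m, Q u v = Q v u) ∧
       (∀ u ∈ gbar g m, ∀ v ∈ gbar g m, ∀ w ∈ gbar g m, Q ⁅u, v⁆ w + Q v ⁅u, w⁆ = 0) ∧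
       (∀ a ∈ h.toSubmodule ⊓ gbar g m, ∀ x ∈ m, Q a x = 0) ∧
       (∀ x ∈ m, ∀ y ∈ m, Q x y = B x y)) ∧
      -- ... which is nondegenerate on ḡ,
      (∀ u ∈ gbar g m, (∀ v ∈ gbar g m, Q u v = 0) → u = 0) ∧
      -- in particular nondegenerate on h ∩ ḡ,
      (∀ a ∈ h.toSubmodule ⊓ gbar g m,
        (∀ b ∈ h.toSubmodule ⊓ gbar g m, Q a b = 0) → a = 0) ∧
      -- ... and unique (as a form on ḡ) with these properties.
      (∀ Q' : LinearMap.BilinForm ℝ g,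
        ((∀ u ∈ gbar g m, ∀ v ∈ gbar g m, Q' u v = Q' v u) ∧
         (∀ u ∈ gbar g m, ∀ v ∈ gbar g m, ∀ w ∈ gbar g m, Q' ⁅u, v⁆ w + Q' v ⁅u, w⁆ = 0) ∧
         (∀ a ∈ h.toSubmodule ⊓ gbar g m, ∀ x ∈ m, Q' a x = 0) ∧
         (∀ x ∈ m, ∀ y ∈ m, Q' x y = B x y)) →
        ∀ u ∈ gbar g m, ∀ v ∈ gbar g m, Q' u v = Q u v) := by
  have hS : IsReductiveSplitting h m ph pm := ⟨hcompl.disjoint, hred, hph, hpm, hdecomp⟩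
  have hB : IsNaturallyReductive h m pm B := ⟨hBsymm, hinv, hnr⟩
  obtain ⟨Q, hQ⟩ := exists_isKostantForm hS hB
  refine ⟨fun x y hy => lie_mem_gbar hS x hy, Q, ⟨fun u hu v hv => hQ.symm hS hB hu hv,
    fun u hu v hv w hw => hQ.lie_invariant hS hB hu hv hw,
    fun a ha x hx => hQ.apply_eq_zero_of_mem_inf hS ha hx, hQ.apply_of_mem⟩,
    fun u hu h0 => hQ.eq_zero_of_forall_mem_gbar hS hB hBnd heff hu h0,
    fun a ha h0 => hQ.eq_zero_of_forall_mem_inf hS hB hBnd heff ha h0, ?_⟩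
  rintro Q' ⟨hsymm', hinv', horth', heq'⟩ u hu v hv
  exact (IsKostantForm.of_lie_invariant hS hBsymm hsymm' hinv' horth' heq').apply_eq_apply
    hS hQ hu hv

/-- Kostant's theorem, pseudo-Riemannian version (Theorem 2.2, first part):
`ḡ = m + [m,m]` is an ideal of `g` and there is a unique symmetric invariant
bilinear form `Q` on `ḡ` with `Q(h ∩ ḡ, m) = 0` and `Q|_{m×m} = ⟨,⟩`; moreover `Q`
is nondegenerate on `ḡ` and on `h ∩ ḡ`. -/
theorem kostant_pseudo_riemannian
    (g : Type) [LieRing g] [LieAlgebra ℝ g] [FiniteDimensional ℝ g]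
    (h : LieSubalgebra ℝ g) (m : Submodule ℝ g)
    -- the action is almost effective: h contains no nonzero ideal of g
    (heff : ∀ I : LieIdeal ℝ g, (I : Submodule ℝ g) ≤ h.toSubmodule → I = ⊥)
    -- g = h ⊕ m as vector spaces
    (hcompl : IsCompl h.toSubmodule m)
    -- [h,m] ⊆ m
    (hred : ∀ a ∈ h, ∀ x ∈ m, ⁅a, x⁆ ∈ m)
    -- projections onto the h- and m-components
    (ph pm : g →ₗ[ℝ] g)
    (hph : ∀ x, ph x ∈ h.toSubmodule) (hpm : ∀ x, pm x ∈ m)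
    (hdecomp : ∀ x, ph x + pm x = x)
    -- the metric ⟨,⟩ on m
    (B : LinearMap.BilinForm ℝ g)
    (hBsymm : ∀ x ∈ m, ∀ y ∈ m, B x y = B y x)
    (hBnd : ∀ x ∈ m, (∀ y ∈ m, B x y = 0) → x = 0)
    -- Ad(H)-invariance (infinitesimally): ⟨[a,y],z⟩ + ⟨y,[a,z]⟩ = 0 for a ∈ h
    (hinv : ∀ a ∈ h, ∀ y ∈ m, ∀ z ∈ m, B ⁅a, y⁆ z + B y ⁅a, z⁆ = 0)
    -- natural reductivity: ⟨[x,y]_m,z⟩ + ⟨y,[x,z]_m⟩ = 0 for x,y,z ∈ m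
    (hnr : ∀ x ∈ m, ∀ y ∈ m, ∀ z ∈ m, B (pm ⁅x, y⁆) z + B y (pm ⁅x, z⁆) = 0) :
    -- ḡ is an ideal of g
    (∀ x : g, ∀ y ∈ gbar g m, ⁅x, y⁆ ∈ gbar g m) ∧
    -- existence of Q ...
    ∃ Q : LinearMap.BilinForm ℝ g,
      ((∀ u ∈ gbar g m, ∀ v ∈ gbar g m, Q u v = Q v u) ∧
       (∀ u ∈ gbar g m, ∀ v ∈ gbar g m, ∀ w ∈ gbar g m, Q ⁅u, v⁆ w + Q v ⁅u, w⁆ = 0) ∧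
       (∀ a ∈ h.toSubmodule ⊓ gbar g m, ∀ x ∈ m, Q a x = 0) ∧
       (∀ x ∈ m, ∀ y ∈ m, Q x y = B x y)) ∧
      -- ... which is nondegenerate on ḡ,
      (∀ u ∈ gbar g m, (∀ v ∈ gbar g m, Q u v = 0) → u = 0) ∧
      -- in particular nondegenerate on h ∩ ḡ,
      (∀ a ∈ h.toSubmodule ⊓ gbar g m,
        (∀ b ∈ h.toSubmodule ⊓ gbar g m, Q a b = 0) → a = 0) ∧
      -- ... and unique (as a form on ḡ) with these properties.
      (∀ Q' : LinearMap.BilinForm ℝ g,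
        ((∀ u ∈ gbar g m, ∀ v ∈ gbar g m, Q' u v = Q' v u) ∧
         (∀ u ∈ gbar g m, ∀ v ∈ gbar g m, ∀ w ∈ gbar g m, Q' ⁅u, v⁆ w + Q' v ⁅u, w⁆ = 0) ∧
         (∀ a ∈ h.toSubmodule ⊓ gbar g m, ∀ x ∈ m, Q' a x = 0) ∧
         (∀ x ∈ m, ∀ y ∈ m, Q' x y = B x y)) →
        ∀ u ∈ gbar g m, ∀ v ∈ gbar g m, Q' u v = Q u v) :=
  kostant_pseudo_riemannian_general g h m heff hcompl hred ph pm hph hpm hdecomp B hBsymm hBnd hinv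
    hnr
end

section
/- One has g = h ⊕ m as a direct sum of vector spaces, [h,m] ⊆ m, the restriction ⟨,⟩ := Q|_{m×m} is nondegenerate and satisfies ⟨[x,y]_m, z⟩ + ⟨y,[x,z]_m⟩ = 0 for all x,y,z ∈ m (where x_m denotes the m-component of x), and moreover g = m + [m,m]. -/
/-!
The orthogonal complement of `m + [m, m]` lies in `m^⊥ = h`, and by invariance its brackets with
`m` are orthogonal to `m`; as `[h, m] ⊆ m`, they lie in `h ∩ m = 0`. By the Jacobi identity the
elements of `h` commuting with `m` form an ideal of `g = h + m`, which vanishes by hypothesis;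
hence `m + [m, m]` has zero orthogonal complement. The remaining claims follow from invariance
and from `g = h ⊕ h^⊥`.
-/

namespace LieSubalgebra

variable {R L : Type*} [CommRing R] [LieRing L] [LieAlgebra R L]

def centralizerIdeal (H : LieSubalgebra R L) (M : Submodule R L)
    (hHM : H.toSubmodule ⊔ M = ⊤) (hHM_lie : ∀ a ∈ H, ∀ x ∈ M, ⁅a, x⁆ ∈ M) :
    LieIdeal R L where
  carrier := {u | u ∈ H ∧ ∀ x ∈ M, ⁅x, u⁆ = 0}
  add_mem' {u v} hu hv :=
    ⟨H.add_mem hu.1 hv.1, fun x hx => by rw [lie_add, hu.2 x hx, hv.2 x hx, add_zero]⟩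
  zero_mem' := ⟨H.zero_mem, fun x _ => lie_zero x⟩
  smul_mem' c u hu := ⟨H.smul_mem c hu.1, fun x hx => by rw [lie_smul, hu.2 x hx, smul_zero]⟩
  lie_mem {v u} hu := by
    obtain ⟨b, hb, x, hx, rfl⟩ :=
      Submodule.mem_sup.1 (hHM ▸ Submodule.mem_top : v ∈ H.toSubmodule ⊔ M)
    rw [add_lie, hu.2 x hx, add_zero]
    refine ⟨H.lie_mem hb hu.1, fun y hy => ?_⟩
    have hyb : ⁅y, b⁆ ∈ M := by rw [← lie_skew]; exact M.neg_mem (hHM_lie b hb y hy)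
    rw [leibniz_lie, hu.2 _ hyb, hu.2 y hy, lie_zero, add_zero]

end LieSubalgebra

namespace LinearMap.BilinForm

section CommRing

variable {R L : Type*} [CommRing R] [LieRing L] [LieAlgebra R L] (B : LinearMap.BilinForm R L)

theorem lie_mem_orthogonal (hB : B.lieInvariant L) {H : LieSubalgebra R L} {a x : L}
    (ha : a ∈ H) (hx : x ∈ B.orthogonal H.toSubmodule) :
    ⁅a, x⁆ ∈ B.orthogonal H.toSubmodule := by
  intro b hb
  rw [← neg_eq_zero, ← hB, hx _ (H.lie_mem ha hb)]

theorem apply_proj_lie_add_apply_proj_lie (hB : B.lieInvariant L) (hB₀ : B.IsRefl)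
    {N : Submodule R L} {p : L → L} (hp : ∀ v, v - p v ∈ N) (x : L) {y z : L}
    (hy : y ∈ B.orthogonal N) (hz : z ∈ B.orthogonal N) :
    B (p ⁅x, y⁆) z + B y (p ⁅x, z⁆) = 0 := by
  have hleft : B (p ⁅x, y⁆) z = B ⁅x, y⁆ z := by
    have := hz _ (hp ⁅x, y⁆)
    rw [map_sub, LinearMap.sub_apply, sub_eq_zero] at this
    exact this.symm
  have hright : B y (p ⁅x, z⁆) = B y ⁅x, z⁆ := by
    have := hB₀ _ _ (hy _ (hp ⁅x, z⁆))
    rw [map_sub, sub_eq_zero] at this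
    exact this.symm
  rw [hleft, hright, hB, neg_add_cancel]

end CommRing

section Field

variable {K L : Type*} [Field K] [LieRing L] [LieAlgebra K L] [FiniteDimensional K L]
  (B : LinearMap.BilinForm K L)

theorem nondegenerate_restrict_orthogonal (hB : B.Nondegenerate) (hB₀ : B.IsRefl)
    {W : Submodule K L} (hW : (B.restrict W).Nondegenerate) :
    (B.restrict (B.orthogonal W)).Nondegenerate := by
  rw [restrict_nondegenerate_iff_isCompl_orthogonal hB₀, orthogonal_orthogonal hB hB₀]
  exact (isCompl_orthogonal_of_restrict_nondegenerate hB₀ hW).symm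

theorem orthogonal_sup_span_lie_eq_top (hB : B.Nondegenerate) (hB₀ : B.IsRefl)
    (hBinv : B.lieInvariant L) {H : LieSubalgebra K L}
    (hH : (B.restrict H.toSubmodule).Nondegenerate)
    (hH_eff : ∀ I : LieIdeal K L, (I : Submodule K L) ≤ H.toSubmodule → I = ⊥) :
    (B.orthogonal H.toSubmodule ⊔ Submodule.span K
      {z | ∃ x ∈ B.orthogonal H.toSubmodule, ∃ y ∈ B.orthogonal H.toSubmodule, z = ⁅x, y⁆}) =
      ⊤ := by
  set M := B.orthogonal H.toSubmodule
  set W := M ⊔ Submodule.span K {z | ∃ x ∈ M, ∃ y ∈ M, z = ⁅x, y⁆}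
  have hcompl : IsCompl H.toSubmodule M := isCompl_orthogonal_of_restrict_nondegenerate hB₀ hH
  have hM_perp : B.orthogonal M = H.toSubmodule := orthogonal_orthogonal hB hB₀ _
  set C := H.centralizerIdeal M hcompl.sup_eq_top fun _ ha _ hx => B.lie_mem_orthogonal hBinv ha hx
  have hC : C = ⊥ := hH_eff C fun u hu => hu.1
  have hW_perp : ∀ u ∈ B.orthogonal W, u ∈ C := by
    intro u hu
    have hu_mem : u ∈ H.toSubmodule := hM_perp ▸ orthogonal_le le_sup_left hu
    refine ⟨hu_mem, fun x hx => ?_⟩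
    have hxu_M : ⁅x, u⁆ ∈ M := by
      rw [← lie_skew]; exact M.neg_mem (B.lie_mem_orthogonal hBinv hu_mem hx)
    have hxu_H : ⁅x, u⁆ ∈ H.toSubmodule := by
      rw [← hM_perp]
      intro y hy
      have hxy : ⁅x, y⁆ ∈ W :=
        Submodule.mem_sup_right (Submodule.subset_span ⟨x, hx, y, hy, rfl⟩)
      rw [← neg_eq_zero, ← hBinv]
      exact hu _ hxy
    exact (Submodule.disjoint_def.1 hcompl.disjoint) _ hxu_H hxu_M
  have hW_perp_bot : B.orthogonal W = ⊥ :=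
    eq_bot_iff.2 fun u hu => by simpa [hC] using hW_perp u hu
  rw [← orthogonal_orthogonal hB hB₀ W, hW_perp_bot, orthogonal_bot]

end Field

end LinearMap.BilinForm

/-- Kostant's theorem, converse direction (Theorem 2.2, second part): if `Q` is a
nondegenerate ad-invariant symmetric bilinear form on `g` whose restriction to the
subalgebra `h` is nondegenerate, and `m := h^⊥`, then `g = h ⊕ m`, `[h,m] ⊆ m`,
the restriction of `Q` to `m` is nondegenerate and naturally reductive, and
`g = m + [m,m]`. -/
theorem kostant_converse
    (g : Type) [LieRing g] [LieAlgebra ℝ g] [FiniteDimensional ℝ g]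
    (Q : LinearMap.BilinForm ℝ g)
    (hQsymm : ∀ u v : g, Q u v = Q v u)
    (hQnd : Q.Nondegenerate)
    (hQinv : ∀ u v w : g, Q ⁅u, v⁆ w = - Q v ⁅u, w⁆)
    (h : LieSubalgebra ℝ g)
    -- h contains no nonzero ideal of g (almost effectiveness)
    (heff : ∀ I : LieIdeal ℝ g, (I : Submodule ℝ g) ≤ h.toSubmodule → I = ⊥)
    -- Q restricted to h is nondegenerate
    (hQh : ∀ a ∈ h, (∀ b ∈ h, Q a b = 0) → a = 0)
    -- m = h^⊥
    (m : Submodule ℝ g)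
    (hm : ∀ x, x ∈ m ↔ ∀ a ∈ h, Q x a = 0) :
    -- g = h ⊕ m as vector spaces
    IsCompl h.toSubmodule m ∧
    -- [h,m] ⊆ m
    (∀ a ∈ h, ∀ x ∈ m, ⁅a, x⁆ ∈ m) ∧
    -- ⟨,⟩ := Q|_{m×m} is nondegenerate
    (∀ x ∈ m, (∀ y ∈ m, Q x y = 0) → x = 0) ∧
    -- natural reductivity: for the projection pm onto m along h,
    -- ⟨[x,y]_m, z⟩ + ⟨y, [x,z]_m⟩ = 0 for all x,y,z ∈ m
    (∀ pm : g →ₗ[ℝ] g, (∀ x, pm x ∈ m) → (∀ x, x - pm x ∈ h.toSubmodule) →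
      ∀ x ∈ m, ∀ y ∈ m, ∀ z ∈ m, Q (pm ⁅x, y⁆) z + Q y (pm ⁅x, z⁆) = 0) ∧
    -- g = m + [m,m]
    (m ⊔ Submodule.span ℝ {z | ∃ x ∈ m, ∃ y ∈ m, z = ⁅x, y⁆}) = ⊤ := by
  have hQ₀ : Q.IsRefl := (⟨hQsymm⟩ : Q.IsSymm).isRefl
  have hm_eq : m = Q.orthogonal h.toSubmodule := by
    ext x
    rw [hm, LinearMap.BilinForm.mem_orthogonal_iff]
    exact forall₂_congr fun a _ => hQ₀.eq_iff
  subst hm_eq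
  have hQh_nd : (Q.restrict h.toSubmodule).Nondegenerate :=
    (hQ₀.domRestrict _).nondegenerate_iff_separatingLeft.2
      fun a ha => Subtype.ext (hQh a a.2 fun b hb => ha ⟨b, hb⟩)
  have hm_nd := Q.nondegenerate_restrict_orthogonal hQnd hQ₀ hQh_nd
  refine ⟨LinearMap.BilinForm.isCompl_orthogonal_of_restrict_nondegenerate hQ₀ hQh_nd,
    fun _ ha _ hx => Q.lie_mem_orthogonal hQinv ha hx,
    fun x hx hxm => congrArg Subtype.val (hm_nd.1 ⟨x, hx⟩ fun y => hxm y y.2),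
    fun _ _ hpm x _ _ hy _ hz => Q.apply_proj_lie_add_apply_proj_lie hQinv hQ₀ hpm x hy hz,
    Q.orthogonal_sup_span_lie_eq_top hQnd hQ₀ hQinv hQh_nd heff⟩
end

section
/- The bracket [(h1,x1,α1),(h2,x2,α2)] := ([h1,h2]_h, [x1,x2]_d + π(h1)x2 − π(h2)x1, β(x1,x2) + ad*(h1)α2 − ad*(h2)α1) on g := h ⊕ d ⊕ h* is bilinear, alternating, and satisfies the Jacobi identity; hence it makes g a Lie algebra (the double extension of d with respect to (h,π)). -/
open Module

variable {H D : Type} [LieRing H] [LieAlgebra ℝ H] [FiniteDimensional ℝ H]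
  [LieRing D] [LieAlgebra ℝ D] [FiniteDimensional ℝ D]

/-- `beta BD π x y` is the element `β(x,y)` of `h*` given by `a ↦ ⟨π(a)x, y⟩_d`. -/
def beta (BD : LinearMap.BilinForm ℝ D) (π : H →ₗ[ℝ] D →ₗ[ℝ] D) (x y : D) : Dual ℝ H :=
  (BD.flip y).comp (π.flip x)

/-- The double extension bracket on `g = h ⊕ d ⊕ h*`:
`[(h₁,x₁,α₁),(h₂,x₂,α₂)] = ([h₁,h₂], [x₁,x₂] + π(h₁)x₂ − π(h₂)x₁,
β(x₁,x₂) + ad*(h₁)α₂ − ad*(h₂)α₁)` where `ad*(h)α = −α ∘ ad(h)`. -/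
def dbr (BD : LinearMap.BilinForm ℝ D) (π : H →ₗ[ℝ] D →ₗ[ℝ] D)
    (u v : H × D × Dual ℝ H) : H × D × Dual ℝ H :=
  (⁅u.1, v.1⁆,
   ⁅u.2.1, v.2.1⁆ + π u.1 v.2.1 - π v.1 u.2.1,
   beta BD π u.2.1 v.2.1 - v.2.2.comp (LieAlgebra.ad ℝ H u.1)
     + u.2.2.comp (LieAlgebra.ad ℝ H v.1))

/-!
The `h`-component of the Jacobi identity is that of `h`. In the `d`-component the terms cancel
because `π` is a homomorphism into derivations. In the `h*`-component, the terms in `α, β, γ`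
cancel because `α ↦ α ∘ ad` is a representation, and the remaining ones vanish by three properties
of `β`: it is antisymmetric, `h`-equivariant (`ad*(a) β(x,y) = β(π(a)x, y) + β(x, π(a)y)`), and
its cyclic sum `β(x,[y,z]) + β(y,[z,x]) + β(z,[x,y])` vanishes since each `π(t)` is a
skew derivation and `⟨,⟩_d` is invariant.
-/

set_option linter.unusedSectionVars false

lemma LinearMap.comp_ad_lie {R L M : Type*} [CommRing R] [LieRing L] [LieAlgebra R L]
    [AddCommGroup M] [Module R M] (f : L →ₗ[R] M) (a b : L) :
    f.comp (LieAlgebra.ad R L ⁅a, b⁆) =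
      (f.comp (LieAlgebra.ad R L a)).comp (LieAlgebra.ad R L b) -
        (f.comp (LieAlgebra.ad R L b)).comp (LieAlgebra.ad R L a) := by
  ext t
  simp

section beta

variable (BD : LinearMap.BilinForm ℝ D) (π : H →ₗ[ℝ] D →ₗ[ℝ] D)

@[simp]
lemma beta_apply (x y : D) (t : H) : beta BD π x y t = BD (π t x) y := rfl

lemma beta_add_left (x x' y : D) : beta BD π (x + x') y = beta BD π x y + beta BD π x' y := by
  ext; simp

lemma beta_add_right (x y y' : D) : beta BD π x (y + y') = beta BD π x y + beta BD π x y' := by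
  ext; simp

lemma beta_sub_right (x y y' : D) : beta BD π x (y - y') = beta BD π x y - beta BD π x y' := by
  ext; simp

lemma beta_smul_left (c : ℝ) (x y : D) : beta BD π (c • x) y = c • beta BD π x y := by
  ext; simp

lemma beta_smul_right (c : ℝ) (x y : D) : beta BD π x (c • y) = c • beta BD π x y := by
  ext; simp

variable {BD π}

lemma beta_swap (hBDsymm : ∀ x y : D, BD x y = BD y x)
    (hπskew : ∀ a : H, ∀ x y : D, BD (π a x) y = - BD x (π a y)) (x y : D) :
    beta BD π y x = - beta BD π x y := by
  ext t
  simp [hπskew, hBDsymm x]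

lemma beta_self (hBDsymm : ∀ x y : D, BD x y = BD y x)
    (hπskew : ∀ a : H, ∀ x y : D, BD (π a x) y = - BD x (π a y)) (x : D) : beta BD π x x = 0 := by
  ext t
  have := hπskew t x x
  rw [hBDsymm x] at this
  simp only [beta_apply, LinearMap.zero_apply]
  linarith

lemma beta_comp_ad (hπhom : ∀ a b : H, π ⁅a, b⁆ = π a ∘ₗ π b - π b ∘ₗ π a)
    (hπskew : ∀ a : H, ∀ x y : D, BD (π a x) y = - BD x (π a y)) (a : H) (x y : D) :
    (beta BD π x y).comp (LieAlgebra.ad ℝ H a) = - (beta BD π (π a x) y + beta BD π x (π a y)) := by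
  ext t
  simp only [beta_apply, LinearMap.comp_apply, LieAlgebra.ad_apply, hπhom, LinearMap.sub_apply,
    map_sub, LinearMap.neg_apply, LinearMap.add_apply, hπskew a]
  abel

lemma beta_lie_cyclic (hBDsymm : ∀ x y : D, BD x y = BD y x)
    (hBDinv : ∀ x y z : D, BD ⁅x, y⁆ z = - BD y ⁅x, z⁆)
    (hπder : ∀ a : H, ∀ x y : D, π a ⁅x, y⁆ = ⁅π a x, y⁆ + ⁅x, π a y⁆)
    (hπskew : ∀ a : H, ∀ x y : D, BD (π a x) y = - BD x (π a y)) (x y z : D) :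
    beta BD π x ⁅y, z⁆ + beta BD π y ⁅z, x⁆ + beta BD π z ⁅x, y⁆ = 0 := by
  have invariant : ∀ u v w : D, BD ⁅u, v⁆ w = BD u ⁅v, w⁆ := fun u v w => by
    rw [← lie_skew, map_neg, LinearMap.neg_apply, hBDinv, neg_neg]
  ext t
  have skew := hπskew t ⁅x, y⁆ z
  rw [hπder, map_add, LinearMap.add_apply] at skew
  have swap_x : BD ⁅x, π t y⁆ z = BD (π t y) ⁅z, x⁆ := by
    rw [← lie_skew, map_neg, LinearMap.neg_apply, invariant, ← lie_skew z, map_neg]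
  simp only [beta_apply, LinearMap.add_apply, LinearMap.zero_apply]
  linear_combination skew - invariant (π t x) y z - swap_x - hBDsymm ⁅x, y⁆ (π t z)

end beta

section dbr

variable (BD : LinearMap.BilinForm ℝ D) (π : H →ₗ[ℝ] D →ₗ[ℝ] D)

lemma dbr_add_left (u v w : H × D × Dual ℝ H) :
    dbr BD π (u + v) w = dbr BD π u w + dbr BD π v w := by
  refine Prod.ext (add_lie _ _ _) (Prod.ext ?_ ?_)
  · simp only [dbr, Prod.fst_add, Prod.snd_add, add_lie, map_add, LinearMap.add_apply]
    abel
  · simp only [dbr, Prod.fst_add, Prod.snd_add, beta_add_left, map_add, LinearMap.add_comp,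
      LinearMap.comp_add]
    abel

lemma dbr_add_right (u v w : H × D × Dual ℝ H) :
    dbr BD π u (v + w) = dbr BD π u v + dbr BD π u w := by
  refine Prod.ext (lie_add _ _ _) (Prod.ext ?_ ?_)
  · simp only [dbr, Prod.fst_add, Prod.snd_add, lie_add, map_add, LinearMap.add_apply]
    abel
  · simp only [dbr, Prod.fst_add, Prod.snd_add, beta_add_right, map_add, LinearMap.add_comp,
      LinearMap.comp_add]
    abel

lemma dbr_smul_left (c : ℝ) (u v : H × D × Dual ℝ H) :
    dbr BD π (c • u) v = c • dbr BD π u v := by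
  refine Prod.ext (smul_lie _ _ _) (Prod.ext ?_ ?_)
  · simp only [dbr, Prod.smul_fst, Prod.smul_snd, smul_lie, map_smul, LinearMap.smul_apply]
    module
  · simp only [dbr, Prod.smul_fst, Prod.smul_snd, beta_smul_left, map_smul, LinearMap.smul_comp,
      LinearMap.comp_smul]
    module

lemma dbr_smul_right (c : ℝ) (u v : H × D × Dual ℝ H) :
    dbr BD π u (c • v) = c • dbr BD π u v := by
  refine Prod.ext (lie_smul _ _ _) (Prod.ext ?_ ?_)
  · simp only [dbr, Prod.smul_fst, Prod.smul_snd, lie_smul, map_smul, LinearMap.smul_apply]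
    module
  · simp only [dbr, Prod.smul_fst, Prod.smul_snd, beta_smul_right, map_smul, LinearMap.smul_comp,
      LinearMap.comp_smul]
    module

variable {BD π}

lemma dbr_self (hBDsymm : ∀ x y : D, BD x y = BD y x)
    (hπskew : ∀ a : H, ∀ x y : D, BD (π a x) y = - BD x (π a y)) (u : H × D × Dual ℝ H) :
    dbr BD π u u = 0 := by
  refine Prod.ext (lie_self _) (Prod.ext ?_ ?_)
  · simp [dbr]
  · simp [dbr, beta_self hBDsymm hπskew]

lemma dbr_jacobi (hBDsymm : ∀ x y : D, BD x y = BD y x)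
    (hBDinv : ∀ x y z : D, BD ⁅x, y⁆ z = - BD y ⁅x, z⁆)
    (hπder : ∀ a : H, ∀ x y : D, π a ⁅x, y⁆ = ⁅π a x, y⁆ + ⁅x, π a y⁆)
    (hπhom : ∀ a b : H, π ⁅a, b⁆ = π a ∘ₗ π b - π b ∘ₗ π a)
    (hπskew : ∀ a : H, ∀ x y : D, BD (π a x) y = - BD x (π a y))
    (u v w : H × D × Dual ℝ H) :
    dbr BD π u (dbr BD π v w) + dbr BD π v (dbr BD π w u) + dbr BD π w (dbr BD π u v) = 0 := by
  obtain ⟨a, x, α⟩ := u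
  obtain ⟨b, y, β⟩ := v
  obtain ⟨c, z, γ⟩ := w
  refine Prod.ext (lie_jacobi a b c) (Prod.ext ?_ ?_)
  · simp only [dbr, hπhom, LinearMap.sub_apply, LinearMap.comp_apply, hπder, lie_add, lie_sub,
      map_add, map_sub, Prod.fst_add, Prod.snd_add, Prod.fst_zero, Prod.snd_zero]
    linear_combination (norm := module) lie_jacobi x y z - lie_skew x (π b z)
      - lie_skew y (π c x) - lie_skew z (π a y)
  · simp only [dbr, Prod.snd_add, Prod.snd_zero, beta_add_right, beta_sub_right,
      LinearMap.add_comp, LinearMap.sub_comp, LinearMap.comp_ad_lie, beta_comp_ad hπhom hπskew]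
    have swap := beta_swap hBDsymm hπskew
    linear_combination (norm := module) beta_lie_cyclic hBDsymm hBDinv hπder hπskew x y z
      + swap x (π b z) + swap y (π c x) + swap z (π a y)

end dbr

theorem double_extension_is_lie_algebra_general
    (BD : LinearMap.BilinForm ℝ D)
    (hBDsymm : ∀ x y : D, BD x y = BD y x)
    (hBDinv : ∀ x y z : D, BD ⁅x, y⁆ z = - BD y ⁅x, z⁆)
    (π : H →ₗ[ℝ] D →ₗ[ℝ] D)
    (hπder : ∀ a : H, ∀ x y : D, π a ⁅x, y⁆ = ⁅π a x, y⁆ + ⁅x, π a y⁆)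
    (hπhom : ∀ a b : H, π ⁅a, b⁆ = π a ∘ₗ π b - π b ∘ₗ π a)
    (hπskew : ∀ a : H, ∀ x y : D, BD (π a x) y = - BD x (π a y)) :
    -- bilinear
    (∀ u v w : H × D × Dual ℝ H, dbr BD π (u + v) w = dbr BD π u w + dbr BD π v w) ∧
    (∀ (c : ℝ) (u v : H × D × Dual ℝ H), dbr BD π (c • u) v = c • dbr BD π u v) ∧
    (∀ u v w : H × D × Dual ℝ H, dbr BD π u (v + w) = dbr BD π u v + dbr BD π u w) ∧
    (∀ (c : ℝ) (u v : H × D × Dual ℝ H), dbr BD π u (c • v) = c • dbr BD π u v) ∧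
    -- alternating
    (∀ u : H × D × Dual ℝ H, dbr BD π u u = 0) ∧
    -- Jacobi identity
    (∀ u v w : H × D × Dual ℝ H,
      dbr BD π u (dbr BD π v w) + dbr BD π v (dbr BD π w u) + dbr BD π w (dbr BD π u v) = 0) :=
  ⟨dbr_add_left BD π, dbr_smul_left BD π, dbr_add_right BD π, dbr_smul_right BD π,
    dbr_self hBDsymm hπskew, dbr_jacobi hBDsymm hBDinv hπder hπhom hπskew⟩

/-- The double extension bracket is bilinear, alternating and satisfies the Jacobi
identity; hence it makes `g = h ⊕ d ⊕ h*` a Lie algebra. -/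
theorem double_extension_is_lie_algebra
    (BH : LinearMap.BilinForm ℝ H)
    (hBHsymm : ∀ a b : H, BH a b = BH b a)
    (hBHinv : ∀ a b c : H, BH ⁅a, b⁆ c = - BH b ⁅a, c⁆)
    (BD : LinearMap.BilinForm ℝ D)
    (hBDsymm : ∀ x y : D, BD x y = BD y x)
    (hBDnd : BD.Nondegenerate)
    (hBDinv : ∀ x y z : D, BD ⁅x, y⁆ z = - BD y ⁅x, z⁆)
    (π : H →ₗ[ℝ] D →ₗ[ℝ] D)
    (hπder : ∀ a : H, ∀ x y : D, π a ⁅x, y⁆ = ⁅π a x, y⁆ + ⁅x, π a y⁆)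
    (hπhom : ∀ a b : H, π ⁅a, b⁆ = π a ∘ₗ π b - π b ∘ₗ π a)
    (hπskew : ∀ a : H, ∀ x y : D, BD (π a x) y = - BD x (π a y)) :
    -- bilinear
    (∀ u v w : H × D × Dual ℝ H, dbr BD π (u + v) w = dbr BD π u w + dbr BD π v w) ∧
    (∀ (c : ℝ) (u v : H × D × Dual ℝ H), dbr BD π (c • u) v = c • dbr BD π u v) ∧
    (∀ u v w : H × D × Dual ℝ H, dbr BD π u (v + w) = dbr BD π u v + dbr BD π u w) ∧
    (∀ (c : ℝ) (u v : H × D × Dual ℝ H), dbr BD π u (c • v) = c • dbr BD π u v) ∧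
    -- alternating
    (∀ u : H × D × Dual ℝ H, dbr BD π u u = 0) ∧
    -- Jacobi identity
    (∀ u v w : H × D × Dual ℝ H,
      dbr BD π u (dbr BD π v w) + dbr BD π v (dbr BD π w u) + dbr BD π w (dbr BD π u v) = 0) :=
  double_extension_is_lie_algebra_general BD hBDsymm hBDinv π hπder hπhom hπskew
end

section
/- The map μ : h → End(G(d)) defined by μ(a)(x + ℓ(h)) := π(a)x + ℓ([a,h]_h) is a Lie algebra homomorphism, every μ(a) is a derivation of the Lie algebra G(d), and every μ(a) is skew-symmetric with respect to the form ⟨,⟩ on G(d): ⟨μ(a)u, v⟩ + ⟨u, μ(a)v⟩ = 0 for all u,v ∈ G(d). -/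
open Module

variable {H D : Type} [LieRing H] [LieAlgebra ℝ H] [FiniteDimensional ℝ H]
  [LieRing D] [LieAlgebra ℝ D] [FiniteDimensional ℝ D]

/-- The bracket on `G(d) = d ⊕ h*`: `[x₁+α₁, x₂+α₂] = [x₁,x₂]_d + β(x₁,x₂)`. -/
def gbr (BD : LinearMap.BilinForm ℝ D) (π : H →ₗ[ℝ] D →ₗ[ℝ] D)
    (u v : D × Dual ℝ H) : D × Dual ℝ H :=
  (⁅u.1, v.1⁆, beta BD π u.1 v.1)

/-- The inverse of the isomorphism `ℓ : h → h*`, `ℓ(h) = ⟨h,·⟩_h`. -/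
noncomputable def ellInv (BH : LinearMap.BilinForm ℝ H) (hBH : BH.Nondegenerate)
    (α : Dual ℝ H) : H :=
  (LinearMap.BilinForm.toDual BH hBH).symm α

/-- The metric on `G(d)`: `⟨x₁ + ℓ(h₁), x₂ + ℓ(h₂)⟩ = ⟨h₁,h₂⟩_h + ⟨x₁,x₂⟩_d`. -/
noncomputable def gform (BH : LinearMap.BilinForm ℝ H) (hBH : BH.Nondegenerate)
    (BD : LinearMap.BilinForm ℝ D) (u v : D × Dual ℝ H) : ℝ :=
  BD u.1 v.1 + BH (ellInv BH hBH u.2) (ellInv BH hBH v.2)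

/-- The map `μ(a)(x + ℓ(h)) = π(a)x + ℓ([a,h]_h)`. -/
noncomputable def mu (BH : LinearMap.BilinForm ℝ H) (hBH : BH.Nondegenerate)
    (π : H →ₗ[ℝ] D →ₗ[ℝ] D) (a : H) (u : D × Dual ℝ H) : D × Dual ℝ H :=
  (π a u.1, BH ⁅a, ellInv BH hBH u.2⁆)

/-
Under the identification `ℓ`, the `h*`-part of `μ(a)` is the coadjoint action `α ↦ -α ∘ ad a`,
by invariance of `⟨,⟩_h`. The derivation property on the `h*`-component then says
`β(π(a)x, y) + β(x, π(a)y) = -β(x, y) ∘ ad a`, which follows from skew-symmetry of `π(a)` and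
`π([a,b]) = [π(a), π(b)]`; everything else is componentwise.
-/

section Ell

variable (BH : LinearMap.BilinForm ℝ H) (hBH : BH.Nondegenerate)

lemma ellInv_bilinForm_apply (h : H) : ellInv BH hBH (BH h) = h :=
  (BH.toDual hBH).symm_apply_apply h

lemma bilinForm_ellInv_apply (α : Dual ℝ H) (b : H) : BH (ellInv BH hBH α) b = α b :=
  LinearMap.BilinForm.apply_toDual_symm_apply α b

lemma bilinForm_lie_ellInv (hBHinv : ∀ a b c : H, BH ⁅a, b⁆ c = - BH b ⁅a, c⁆)
    (a : H) (α : Dual ℝ H) (b : H) : BH ⁅a, ellInv BH hBH α⁆ b = - α ⁅a, b⁆ := by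
  rw [hBHinv, bilinForm_ellInv_apply]

end Ell

section Mu

variable (BH : LinearMap.BilinForm ℝ H) (hBH : BH.Nondegenerate) (BD : LinearMap.BilinForm ℝ D)
  (π : H →ₗ[ℝ] D →ₗ[ℝ] D)

omit [FiniteDimensional ℝ D]

lemma mu_add (a : H) (u v : D × Dual ℝ H) :
    mu BH hBH π a (u + v) = mu BH hBH π a u + mu BH hBH π a v := by
  simp only [mu, ellInv, Prod.fst_add, Prod.snd_add, map_add, lie_add, Prod.mk_add_mk]

lemma mu_smul (a : H) (c : ℝ) (u : D × Dual ℝ H) :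
    mu BH hBH π a (c • u) = c • mu BH hBH π a u := by
  simp only [mu, ellInv, Prod.smul_fst, Prod.smul_snd, map_smul, lie_smul, Prod.smul_mk]

lemma mu_lie (hπhom : ∀ a b : H, π ⁅a, b⁆ = π a ∘ₗ π b - π b ∘ₗ π a) (a b : H)
    (u : D × Dual ℝ H) :
    mu BH hBH π ⁅a, b⁆ u = mu BH hBH π a (mu BH hBH π b u) - mu BH hBH π b (mu BH hBH π a u) := by
  simp only [mu, ellInv_bilinForm_apply, hπhom, lie_lie, map_sub, Prod.mk_sub_mk]
  rfl

omit [FiniteDimensional ℝ H] in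
lemma beta_pi_add_beta_pi (hπhom : ∀ a b : H, π ⁅a, b⁆ = π a ∘ₗ π b - π b ∘ₗ π a)
    (hπskew : ∀ a : H, ∀ x y : D, BD (π a x) y = - BD x (π a y)) (a : H) (x y : D) (b : H) :
    beta BD π (π a x) y b + beta BD π x (π a y) b = - beta BD π x y ⁅a, b⁆ := by
  have hskew : BD (π b x) (π a y) = - BD (π a (π b x)) y := by rw [hπskew a, neg_neg]
  simp only [beta, LinearMap.comp_apply, LinearMap.flip_apply, LinearMap.BilinForm.flip_apply,
    hπhom, LinearMap.sub_apply, map_sub]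
  rw [hskew]
  ring

lemma mu_gbr (hBHinv : ∀ a b c : H, BH ⁅a, b⁆ c = - BH b ⁅a, c⁆)
    (hπder : ∀ a : H, ∀ x y : D, π a ⁅x, y⁆ = ⁅π a x, y⁆ + ⁅x, π a y⁆)
    (hπhom : ∀ a b : H, π ⁅a, b⁆ = π a ∘ₗ π b - π b ∘ₗ π a)
    (hπskew : ∀ a : H, ∀ x y : D, BD (π a x) y = - BD x (π a y)) (a : H) (u v : D × Dual ℝ H) :
    mu BH hBH π a (gbr BD π u v) = gbr BD π (mu BH hBH π a u) v + gbr BD π u (mu BH hBH π a v) := by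
  refine Prod.ext (hπder a u.1 v.1) (LinearMap.ext fun b ↦ ?_)
  simp only [mu, gbr, Prod.snd_add, LinearMap.add_apply]
  rw [bilinForm_lie_ellInv BH hBH hBHinv, beta_pi_add_beta_pi BD π hπhom hπskew]

lemma gform_mu_add_gform_mu (hBHinv : ∀ a b c : H, BH ⁅a, b⁆ c = - BH b ⁅a, c⁆)
    (hπskew : ∀ a : H, ∀ x y : D, BD (π a x) y = - BD x (π a y)) (a : H) (u v : D × Dual ℝ H) :
    gform BH hBH BD (mu BH hBH π a u) v + gform BH hBH BD u (mu BH hBH π a v) = 0 := by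
  simp only [gform, mu, ellInv_bilinForm_apply, hπskew, hBHinv]
  ring

end Mu

theorem mu_homomorphism_skew_derivations_general
    (BH : LinearMap.BilinForm ℝ H)
    (hBHnd : BH.Nondegenerate)
    (hBHinv : ∀ a b c : H, BH ⁅a, b⁆ c = - BH b ⁅a, c⁆)
    (BD : LinearMap.BilinForm ℝ D)
    (π : H →ₗ[ℝ] D →ₗ[ℝ] D)
    (hπder : ∀ a : H, ∀ x y : D, π a ⁅x, y⁆ = ⁅π a x, y⁆ + ⁅x, π a y⁆)
    (hπhom : ∀ a b : H, π ⁅a, b⁆ = π a ∘ₗ π b - π b ∘ₗ π a)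
    (hπskew : ∀ a : H, ∀ x y : D, BD (π a x) y = - BD x (π a y)) :
    -- each μ(a) is linear, i.e. μ(a) ∈ End(G(d))
    (∀ a : H, ∀ u v : D × Dual ℝ H,
      mu BH hBHnd π a (u + v) = mu BH hBHnd π a u + mu BH hBHnd π a v) ∧
    (∀ a : H, ∀ (c : ℝ) (u : D × Dual ℝ H),
      mu BH hBHnd π a (c • u) = c • mu BH hBHnd π a u) ∧
    -- μ is a Lie algebra homomorphism h → End(G(d))
    (∀ a b : H, ∀ u : D × Dual ℝ H,
      mu BH hBHnd π ⁅a, b⁆ u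
        = mu BH hBHnd π a (mu BH hBHnd π b u) - mu BH hBHnd π b (mu BH hBHnd π a u)) ∧
    -- each μ(a) is a derivation of the Lie algebra G(d)
    (∀ a : H, ∀ u v : D × Dual ℝ H,
      mu BH hBHnd π a (gbr BD π u v)
        = gbr BD π (mu BH hBHnd π a u) v + gbr BD π u (mu BH hBHnd π a v)) ∧
    -- each μ(a) is skew-symmetric with respect to ⟨,⟩
    (∀ a : H, ∀ u v : D × Dual ℝ H,
      gform BH hBHnd BD (mu BH hBHnd π a u) v + gform BH hBHnd BD u (mu BH hBHnd π a v) = 0) :=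
  ⟨mu_add BH hBHnd π, mu_smul BH hBHnd π, mu_lie BH hBHnd π hπhom,
    mu_gbr BH hBHnd BD π hBHinv hπder hπhom hπskew,
    gform_mu_add_gform_mu BH hBHnd BD π hBHinv hπskew⟩

/-- `μ : h → End(G(d))` is a Lie algebra homomorphism whose values are derivations of
`G(d)`, skew-symmetric with respect to the form `⟨,⟩` of `G(d)`. -/
theorem mu_homomorphism_skew_derivations
    (BH : LinearMap.BilinForm ℝ H)
    (hBHsymm : ∀ a b : H, BH a b = BH b a)
    (hBHnd : BH.Nondegenerate)
    (hBHinv : ∀ a b c : H, BH ⁅a, b⁆ c = - BH b ⁅a, c⁆)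
    (BD : LinearMap.BilinForm ℝ D)
    (hBDsymm : ∀ x y : D, BD x y = BD y x)
    (hBDnd : BD.Nondegenerate)
    (hBDinv : ∀ x y z : D, BD ⁅x, y⁆ z = - BD y ⁅x, z⁆)
    (π : H →ₗ[ℝ] D →ₗ[ℝ] D)
    (hπder : ∀ a : H, ∀ x y : D, π a ⁅x, y⁆ = ⁅π a x, y⁆ + ⁅x, π a y⁆)
    (hπhom : ∀ a b : H, π ⁅a, b⁆ = π a ∘ₗ π b - π b ∘ₗ π a)
    (hπskew : ∀ a : H, ∀ x y : D, BD (π a x) y = - BD x (π a y)) :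
    -- each μ(a) is linear, i.e. μ(a) ∈ End(G(d))
    (∀ a : H, ∀ u v : D × Dual ℝ H,
      mu BH hBHnd π a (u + v) = mu BH hBHnd π a u + mu BH hBHnd π a v) ∧
    (∀ a : H, ∀ (c : ℝ) (u : D × Dual ℝ H),
      mu BH hBHnd π a (c • u) = c • mu BH hBHnd π a u) ∧
    -- μ is a Lie algebra homomorphism h → End(G(d))
    (∀ a b : H, ∀ u : D × Dual ℝ H,
      mu BH hBHnd π ⁅a, b⁆ u
        = mu BH hBHnd π a (mu BH hBHnd π b u) - mu BH hBHnd π b (mu BH hBHnd π a u)) ∧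
    -- each μ(a) is a derivation of the Lie algebra G(d)
    (∀ a : H, ∀ u v : D × Dual ℝ H,
      mu BH hBHnd π a (gbr BD π u v)
        = gbr BD π (mu BH hBHnd π a u) v + gbr BD π u (mu BH hBHnd π a v)) ∧
    -- each μ(a) is skew-symmetric with respect to ⟨,⟩
    (∀ a : H, ∀ u v : D × Dual ℝ H,
      gform BH hBHnd BD (mu BH hBHnd π a u) v + gform BH hBHnd BD u (mu BH hBHnd π a v) = 0) :=
  mu_homomorphism_skew_derivations_general BH hBHnd hBHinv BD π hπder hπhom hπskew
end

section
/- The bilinear map ∇ on G(d) defined by ∇_{x1+ℓ(h1)}(x2+ℓ(h2)) := ½([x1,x2]_d + β(x1,x2) − π(h1)x2 − π(h2)x1) satisfies the Koszul formula for the form ⟨,⟩ and the bracket of G(d): 2⟨∇_{w1}w2, w3⟩ = ⟨[w1,w2], w3⟩ − ⟨[w2,w3], w1⟩ + ⟨[w3,w1], w2⟩ for all w1,w2,w3 ∈ G(d) (i.e. ∇ is the Levi-Civita connection of the left-invariant metric). -/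
open Module

variable {H D : Type} [LieRing H] [LieAlgebra ℝ H] [FiniteDimensional ℝ H]
  [LieRing D] [LieAlgebra ℝ D] [FiniteDimensional ℝ D]

/-- The connection `∇_{x₁+ℓ(h₁)}(x₂+ℓ(h₂)) = ½([x₁,x₂]_d + β(x₁,x₂) − π(h₁)x₂ − π(h₂)x₁)`. -/
noncomputable def nabG (BH : LinearMap.BilinForm ℝ H) (hBH : BH.Nondegenerate)
    (BD : LinearMap.BilinForm ℝ D) (π : H →ₗ[ℝ] D →ₗ[ℝ] D)
    (u v : D × Dual ℝ H) : D × Dual ℝ H :=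
  ((2⁻¹ : ℝ) • (⁅u.1, v.1⁆ - π (ellInv BH hBH u.2) v.1 - π (ellInv BH hBH v.2) u.1),
   (2⁻¹ : ℝ) • beta BD π u.1 v.1)

/-!
Write `wᵢ = xᵢ + ℓ(hᵢ)`. A functional `α ∈ h*` pairs with `ℓ(h)` to `α(h)`, so every term of the
Koszul formula is a value of `⟨,⟩_d`. The terms `⟨[xᵢ,xⱼ],xₖ⟩_d` of the right-hand side agree up to
sign by invariance and symmetry of `⟨,⟩_d`, and the terms `β(xᵢ,xⱼ)(hₖ) = ⟨π(hₖ)xᵢ,xⱼ⟩_d` match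
the `π`-terms of `2⟨∇_{w₁}w₂,w₃⟩` by skew-symmetry of `π(h₂)`.
-/

theorem LinearMap.BilinForm.lieInvariant.apply_lie_rotate {R L : Type*} [CommRing R] [LieRing L]
    [LieAlgebra R L] {Φ : LinearMap.BilinForm R L} (hΦ : Φ.lieInvariant L) (hsymm : Φ.IsSymm)
    (x y z : L) : Φ ⁅x, y⁆ z = Φ ⁅z, x⁆ y := by
  rw [hΦ, ← lie_skew, map_neg, neg_neg, hsymm.eq]

section

variable {𝔥 𝔡 : Type} [LieRing 𝔥] [LieAlgebra ℝ 𝔥] [FiniteDimensional ℝ 𝔥] [LieRing 𝔡]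
  [LieAlgebra ℝ 𝔡] (BH : LinearMap.BilinForm ℝ 𝔥) (hBH : BH.Nondegenerate)
  (BD : LinearMap.BilinForm ℝ 𝔡) (π : 𝔥 →ₗ[ℝ] 𝔡 →ₗ[ℝ] 𝔡)

theorem apply_ellInv_left (α : Dual ℝ 𝔥) (a : 𝔥) : BH (ellInv BH hBH α) a = α a :=
  LinearMap.BilinForm.apply_toDual_symm_apply α a

theorem gform_gbr (u v w : 𝔡 × Dual ℝ 𝔥) :
    gform BH hBH BD (gbr BD π u v) w
      = BD ⁅u.1, v.1⁆ w.1 + BD (π (ellInv BH hBH w.2) u.1) v.1 := by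
  rw [gform, gbr, apply_ellInv_left]
  rfl

theorem two_mul_gform_nabG (u v w : 𝔡 × Dual ℝ 𝔥) :
    2 * gform BH hBH BD (nabG BH hBH BD π u v) w
      = BD ⁅u.1, v.1⁆ w.1 - BD (π (ellInv BH hBH u.2) v.1) w.1
        - BD (π (ellInv BH hBH v.2) u.1) w.1 + BD (π (ellInv BH hBH w.2) u.1) v.1 := by
  rw [gform, nabG, apply_ellInv_left]
  simp only [map_smul, map_sub, LinearMap.smul_apply, LinearMap.sub_apply, smul_eq_mul]
  have hβ : beta BD π u.1 v.1 (ellInv BH hBH w.2) = BD (π (ellInv BH hBH w.2) u.1) v.1 := rfl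
  rw [hβ]
  ring

end

theorem nabG_satisfies_Koszul_general
    (BH : LinearMap.BilinForm ℝ H)
    (hBHnd : BH.Nondegenerate)
    (BD : LinearMap.BilinForm ℝ D)
    (hBDsymm : ∀ x y : D, BD x y = BD y x)
    (hBDinv : ∀ x y z : D, BD ⁅x, y⁆ z = - BD y ⁅x, z⁆)
    (π : H →ₗ[ℝ] D →ₗ[ℝ] D)
    (hπskew : ∀ a : H, ∀ x y : D, BD (π a x) y = - BD x (π a y)) :
    ∀ w₁ w₂ w₃ : D × Dual ℝ H,
      2 * gform BH hBHnd BD (nabG BH hBHnd BD π w₁ w₂) w₃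
        = gform BH hBHnd BD (gbr BD π w₁ w₂) w₃
          - gform BH hBHnd BD (gbr BD π w₂ w₃) w₁
          + gform BH hBHnd BD (gbr BD π w₃ w₁) w₂ := by
  intro w₁ w₂ w₃
  rw [two_mul_gform_nabG, gform_gbr, gform_gbr, gform_gbr]
  have hrotate : BD ⁅w₃.1, w₁.1⁆ w₂.1 = BD ⁅w₂.1, w₃.1⁆ w₁.1 :=
    LinearMap.BilinForm.lieInvariant.apply_lie_rotate hBDinv ⟨hBDsymm⟩ _ _ _
  have hskew : BD (π (ellInv BH hBHnd w₂.2) w₃.1) w₁.1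
      = - BD (π (ellInv BH hBHnd w₂.2) w₁.1) w₃.1 := by
    rw [hπskew, hBDsymm]
  linarith

/-- `∇` satisfies the Koszul formula for the metric `⟨,⟩` and the bracket of `G(d)`,
i.e. it is the Levi-Civita connection of the left-invariant metric on `G(D)`. -/
theorem nabG_satisfies_Koszul
    (BH : LinearMap.BilinForm ℝ H)
    (hBHsymm : ∀ a b : H, BH a b = BH b a)
    (hBHnd : BH.Nondegenerate)
    (hBHinv : ∀ a b c : H, BH ⁅a, b⁆ c = - BH b ⁅a, c⁆)
    (BD : LinearMap.BilinForm ℝ D)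
    (hBDsymm : ∀ x y : D, BD x y = BD y x)
    (hBDnd : BD.Nondegenerate)
    (hBDinv : ∀ x y z : D, BD ⁅x, y⁆ z = - BD y ⁅x, z⁆)
    (π : H →ₗ[ℝ] D →ₗ[ℝ] D)
    (hπder : ∀ a : H, ∀ x y : D, π a ⁅x, y⁆ = ⁅π a x, y⁆ + ⁅x, π a y⁆)
    (hπhom : ∀ a b : H, π ⁅a, b⁆ = π a ∘ₗ π b - π b ∘ₗ π a)
    (hπskew : ∀ a : H, ∀ x y : D, BD (π a x) y = - BD x (π a y)) :
    ∀ w₁ w₂ w₃ : D × Dual ℝ H,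
      2 * gform BH hBHnd BD (nabG BH hBHnd BD π w₁ w₂) w₃
        = gform BH hBHnd BD (gbr BD π w₁ w₂) w₃
          - gform BH hBHnd BD (gbr BD π w₂ w₃) w₁
          + gform BH hBHnd BD (gbr BD π w₃ w₁) w₂ :=
  nabG_satisfies_Koszul_general BH hBHnd BD hBDsymm hBDinv π hπskew
end

section
/- The Ricci tensor Ric(u,v) := tr(w ↦ R(w,u)v) of G(d) satisfies: (i) Ric(ℓ(h1), ℓ(h2)) = −¼ tr(π(h1)∘π(h2)) for h1,h2 ∈ h; (ii) Ric(x, ℓ(h)) = −¼ tr(π(h)∘ad_d(x)) for x ∈ d, h ∈ h, where ad_d(x) is the adjoint map of d; (iii) if (z_i) is a basis of h orthonormal for ⟨,⟩_h with ε_i := ⟨z_i,z_i⟩_h = ±1, then Ric(x,y) = ½ Σ_i ε_i ⟨π(z_i)²x, y⟩_d − ¼ tr(ad_d(x)∘ad_d(y)) for all x,y ∈ d. -/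
/-!
Split the trace over `G(d) = d ⊕ h*` into the traces of the two diagonal blocks. The `h*`-block of
`w ↦ R(w,u)v` is always `γ ↦ ¼ β(u_d, π(ℓ⁻¹γ) v_d)`, so it only contributes when `u, v ∈ d`. The
`d`-blocks are explicit combinations of `ad_d`, `π` and `β`: the terms `ad_d z` and `π a` are
skew-symmetric for `⟨,⟩_d`, hence traceless, and the terms passing through `h*` are evaluated in
the orthonormal basis by `tr_h (ℓ⁻¹ ∘ φ) = Σᵢ εᵢ φ(zᵢ)(zᵢ)`.
-/

open Module

variable {H D : Type} [LieRing H] [LieAlgebra ℝ H] [FiniteDimensional ℝ H]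
  [LieRing D] [LieAlgebra ℝ D] [FiniteDimensional ℝ D]

/-- The curvature `R(w₁,w₂)w₃ = ∇_{w₁}∇_{w₂}w₃ − ∇_{w₂}∇_{w₁}w₃ − ∇_{[w₁,w₂]}w₃`. -/
noncomputable def Rfun (BH : LinearMap.BilinForm ℝ H) (hBH : BH.Nondegenerate)
    (BD : LinearMap.BilinForm ℝ D) (π : H →ₗ[ℝ] D →ₗ[ℝ] D)
    (w₁ w₂ w₃ : D × Dual ℝ H) : D × Dual ℝ H :=
  nabG BH hBH BD π w₁ (nabG BH hBH BD π w₂ w₃)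
    - nabG BH hBH BD π w₂ (nabG BH hBH BD π w₁ w₃)
    - nabG BH hBH BD π (gbr BD π w₁ w₂) w₃

namespace LinearMap

variable {K M N : Type*} [Field K] [AddCommGroup M] [Module K M] [AddCommGroup N] [Module K N]

theorem trace_prod [FiniteDimensional K M] [FiniteDimensional K N] (f : (M × N) →ₗ[K] (M × N)) :
    trace K (M × N) f =
      trace K M (fst K M N ∘ₗ f ∘ₗ inl K M N) + trace K N (snd K M N ∘ₗ f ∘ₗ inr K M N) := by
  have hf : f = inl K M N ∘ₗ (fst K M N ∘ₗ f) + inr K M N ∘ₗ (snd K M N ∘ₗ f) := by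
    ext x <;> simp
  conv_lhs => rw [hf]
  rw [map_add, trace_comp_comm' (fst K M N ∘ₗ f), trace_comp_comm' (snd K M N ∘ₗ f), comp_assoc,
    comp_assoc]

namespace BilinForm

theorem trace_eq_zero_of_skew [CharZero K] [FiniteDimensional K M] {B : LinearMap.BilinForm K M}
    (hB : B.Nondegenerate) {A : M →ₗ[K] M} (hA : ∀ v w, B (A v) w = -B v (A w)) :
    trace K M A = 0 := by
  have hconj : (B.toDual hB).conj A = -A.dualMap := by
    ext v w
    simp [LinearEquiv.conj_apply, toDual_def, hA]
  have := trace_conj' A (B.toDual hB)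
  rw [hconj, (trace K (Dual K M)).map_neg A.dualMap, dualMap_def, trace_transpose'] at this
  exact CharZero.eq_neg_self_iff.mp this.symm

variable {ι : Type*} [Fintype ι] [DecidableEq ι] {B : LinearMap.BilinForm K M} {b : Basis ι K M}
  {ε : ι → K}

theorem trace_eq_sum_of_orthonormal (hε : ∀ i, ε i = 1 ∨ ε i = -1)
    (hb : ∀ i j, B (b i) (b j) = if i = j then ε i else 0) (f : M →ₗ[K] M) :
    trace K M f = ∑ i, ε i * B (f (b i)) (b i) := by
  have hrepr : ∀ v i, B v (b i) = b.repr v i * ε i := fun v i => by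
    conv_lhs => rw [← b.sum_repr v]
    simp only [map_sum, map_smul, LinearMap.sum_apply, LinearMap.smul_apply, hb, smul_eq_mul,
      mul_ite, mul_zero, Finset.sum_ite_eq', Finset.mem_univ, if_true]
  rw [trace_eq_matrix_trace K b f, Matrix.trace]
  refine Finset.sum_congr rfl fun i _ => ?_
  rw [Matrix.diag_apply, LinearMap.toMatrix_apply, hrepr, ← mul_assoc, mul_comm (ε i), mul_assoc]
  rcases hε i with h | h <;> simp [h]

variable [FiniteDimensional K M]

theorem toDual_symm_apply_self (hB : B.Nondegenerate) (v : M) : (B.toDual hB).symm (B v) = v :=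
  (B.toDual hB).symm_apply_apply v

theorem trace_toDual_symm_comp (hB : B.Nondegenerate) (hε : ∀ i, ε i = 1 ∨ ε i = -1)
    (hb : ∀ i j, B (b i) (b j) = if i = j then ε i else 0) (φ : M →ₗ[K] Dual K M) :
    trace K M ((B.toDual hB).symm.toLinearMap ∘ₗ φ) = ∑ i, ε i * φ (b i) (b i) := by
  simp [trace_eq_sum_of_orthonormal hε hb]

end BilinForm

end LinearMap

open LinearMap (trace fst snd inl inr)
open LinearMap.BilinForm (toDual_symm_apply_self trace_eq_zero_of_skew trace_toDual_symm_comp)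

def betaBilin (BD : LinearMap.BilinForm ℝ D) (π : H →ₗ[ℝ] D →ₗ[ℝ] D) :
    D →ₗ[ℝ] D →ₗ[ℝ] Dual ℝ H :=
  LinearMap.mk₂ ℝ (beta BD π) (fun _ _ _ => by ext; simp [beta])
    (fun _ _ _ => by ext; simp [beta]) (fun _ _ _ => by ext; simp [beta])
    (fun _ _ _ => by ext; simp [beta])

section

variable {BH : LinearMap.BilinForm ℝ H} {hBHnd : BH.Nondegenerate} {BD : LinearMap.BilinForm ℝ D}
  {π : H →ₗ[ℝ] D →ₗ[ℝ] D}

theorem trace_eq_of_apply_eq_Rfun {u v : D × Dual ℝ H} {f : (D × Dual ℝ H) →ₗ[ℝ] D × Dual ℝ H}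
    (hf : ∀ w, f w = Rfun BH hBHnd BD π w u v) :
    trace ℝ _ f = trace ℝ D (fst ℝ D _ ∘ₗ f ∘ₗ inl ℝ D _) +
      4⁻¹ * trace ℝ _ (betaBilin BD π u.1 ∘ₗ π.flip v.1 ∘ₗ (BH.toDual hBHnd).symm.toLinearMap) := by
  have hdual : snd ℝ D _ ∘ₗ f ∘ₗ inr ℝ D _ =
      (4⁻¹ : ℝ) • (betaBilin BD π u.1 ∘ₗ π.flip v.1 ∘ₗ (BH.toDual hBHnd).symm.toLinearMap) := by
    ext γ a
    simp only [LinearMap.coe_comp, LinearMap.coe_snd, LinearMap.coe_inr, Function.comp_apply, hf,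
      Rfun, nabG, ellInv, beta, lie_smul, lie_sub, zero_lie, sub_self, smul_zero, map_smul,
      map_sub, zero_sub, LinearMap.smul_apply, map_zero, sub_zero, smul_neg, LinearMap.comp_zero,
      lie_neg, map_neg, sub_neg_eq_add, LinearMap.zero_apply, smul_add, LinearMap.neg_comp,
      Prod.mk_sub_mk, zero_add, gbr, LinearMap.coe_smul, LinearMap.flip_apply, Pi.smul_apply,
      LinearMap.BilinForm.flip_apply, smul_eq_mul, betaBilin, LinearEquiv.coe_coe,
      LinearMap.mk₂_apply]
    ring
  rw [LinearMap.trace_prod, hdual, map_smul, smul_eq_mul]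

theorem trace_eq_of_apply_eq_Rfun_ell_ell {h₁ h₂ : H} {f : (D × Dual ℝ H) →ₗ[ℝ] D × Dual ℝ H}
    (hf : ∀ w, f w = Rfun BH hBHnd BD π w (0, BH h₁) (0, BH h₂)) :
    trace ℝ _ f = -4⁻¹ * trace ℝ D (π h₁ ∘ₗ π h₂) := by
  have hblock : fst ℝ D _ ∘ₗ f ∘ₗ inl ℝ D _ = (-4⁻¹ : ℝ) • (π h₁ ∘ₗ π h₂) := by
    ext z
    simp only [LinearMap.coe_comp, LinearMap.coe_fst, LinearMap.coe_inl, Function.comp_apply, hf,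
      Rfun, nabG, lie_self, ellInv, toDual_symm_apply_self, map_zero, sub_self, smul_zero, beta,
      LinearMap.comp_zero, lie_zero, LinearMap.zero_apply, LinearMap.zero_comp, zero_sub,
      smul_neg, lie_neg, lie_smul, zero_lie, neg_zero, map_neg, map_smul, sub_neg_eq_add,
      zero_add, sub_zero, smul_smul, Prod.mk_sub_mk, gbr, neg_smul, LinearMap.neg_apply,
      LinearMap.smul_apply, neg_inj]
    module
  simp [trace_eq_of_apply_eq_Rfun hf, hblock]

theorem trace_eq_of_apply_eq_Rfun_d_ell (hBDnd : BD.Nondegenerate)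
    (hBDinv : ∀ x y z : D, BD ⁅x, y⁆ z = - BD y ⁅x, z⁆)
    (hπder : ∀ a : H, ∀ x y : D, π a ⁅x, y⁆ = ⁅π a x, y⁆ + ⁅x, π a y⁆)
    {x : D} {h : H} {f : (D × Dual ℝ H) →ₗ[ℝ] D × Dual ℝ H}
    (hf : ∀ w, f w = Rfun BH hBHnd BD π w (x, 0) (0, BH h)) :
    trace ℝ _ f = -4⁻¹ * trace ℝ D (π h ∘ₗ LieAlgebra.ad ℝ D x) := by
  have hblock : fst ℝ D _ ∘ₗ f ∘ₗ inl ℝ D _ =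
      (-4⁻¹ : ℝ) • (LieAlgebra.ad ℝ D (π h x) + LieAlgebra.ad ℝ D x ∘ₗ π h) := by
    ext z
    simp only [LinearMap.coe_comp, LinearMap.coe_fst, LinearMap.coe_inl, Function.comp_apply, hf,
      Rfun, nabG, lie_zero, ellInv, map_zero, LinearMap.zero_apply, sub_self,
      toDual_symm_apply_self, zero_sub, smul_neg, beta, LinearMap.zero_comp, smul_zero, lie_neg,
      lie_smul, sub_zero, map_neg, map_smul, LinearMap.neg_comp, Prod.mk_sub_mk, sub_neg_eq_add,
      gbr, hπder, neg_add_rev, lie_skew, smul_add, neg_smul, LinearMap.add_apply,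
      LinearMap.neg_apply, LinearMap.smul_apply, LieAlgebra.ad_apply]
    rw [← lie_skew (π h x) z]
    module
  have htrace_ad : trace ℝ D (LieAlgebra.ad ℝ D (π h x)) = 0 :=
    trace_eq_zero_of_skew hBDnd (hBDinv _)
  simp [trace_eq_of_apply_eq_Rfun hf, hblock, htrace_ad, LinearMap.trace_comp_comm' (π h)]

section Orthonormal

variable {ι : Type*} [Fintype ι] [DecidableEq ι] {bz : Basis ι ℝ H} {ε : ι → ℝ}

theorem trace_flip_comp_toDual_symm_comp_betaBilin_flip (hε : ∀ i, ε i = 1 ∨ ε i = -1)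
    (hb : ∀ i j, BH (bz i) (bz j) = if i = j then ε i else 0) (x y : D) :
    trace ℝ D (π.flip x ∘ₗ (BH.toDual hBHnd).symm.toLinearMap ∘ₗ (betaBilin BD π).flip y) =
      ∑ i, ε i * BD (π (bz i) (π (bz i) x)) y := by
  rw [LinearMap.trace_comp_comm', LinearMap.comp_assoc, trace_toDual_symm_comp hBHnd hε hb]
  simp [betaBilin, beta]

theorem trace_eq_of_apply_eq_Rfun_d_d (hBDsymm : ∀ x y : D, BD x y = BD y x)
    (hBDnd : BD.Nondegenerate) (hBDinv : ∀ x y z : D, BD ⁅x, y⁆ z = - BD y ⁅x, z⁆)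
    (hπskew : ∀ a : H, ∀ x y : D, BD (π a x) y = - BD x (π a y))
    (hε : ∀ i, ε i = 1 ∨ ε i = -1) (hb : ∀ i j, BH (bz i) (bz j) = if i = j then ε i else 0)
    {x y : D} {f : (D × Dual ℝ H) →ₗ[ℝ] D × Dual ℝ H}
    (hf : ∀ w, f w = Rfun BH hBHnd BD π w (x, 0) (y, 0)) :
    trace ℝ _ f = 2⁻¹ * ∑ i, ε i * BD (π (bz i) (π (bz i) x)) y
      - 4⁻¹ * trace ℝ D (LieAlgebra.ad ℝ D x ∘ₗ LieAlgebra.ad ℝ D y) := by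
  have hblock : fst ℝ D _ ∘ₗ f ∘ₗ inl ℝ D _ =
      (-4⁻¹ : ℝ) • LieAlgebra.ad ℝ D ⁅x, y⁆ - (4⁻¹ : ℝ) • π (ellInv BH hBHnd (beta BD π x y))
        + (4⁻¹ : ℝ) • (LieAlgebra.ad ℝ D x ∘ₗ LieAlgebra.ad ℝ D y)
        + (4⁻¹ : ℝ) •
          (π.flip x ∘ₗ (BH.toDual hBHnd).symm.toLinearMap ∘ₗ (betaBilin BD π).flip y)
        - (2⁻¹ : ℝ) • (LieAlgebra.ad ℝ D y ∘ₗ LieAlgebra.ad ℝ D x)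
        + (2⁻¹ : ℝ) •
          (π.flip y ∘ₗ (BH.toDual hBHnd).symm.toLinearMap ∘ₗ (betaBilin BD π).flip x) := by
    ext z
    simp only [LinearMap.coe_comp, LinearMap.coe_fst, LinearMap.coe_inl, Function.comp_apply, hf,
      Rfun, nabG, ellInv, map_zero, LinearMap.zero_apply, sub_zero, lie_smul, map_smul,
      smul_zero, LinearMap.smul_apply, Prod.mk_sub_mk, gbr, lie_lie, LieHom.map_lie, neg_smul,
      betaBilin, LinearMap.add_apply, LinearMap.sub_apply, LinearMap.neg_apply,
      LieHom.lie_apply, LieAlgebra.ad_apply, End.lie_apply, LinearEquiv.coe_coe,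
      LinearMap.flip_apply, LinearMap.mk₂_apply]
    rw [← lie_skew z y, ← lie_skew z ⁅x, y⁆, lie_lie]
    simp only [lie_neg]
    module
  have htrace_ad : trace ℝ D (LieAlgebra.ad ℝ D ⁅x, y⁆) = 0 :=
    trace_eq_zero_of_skew hBDnd (hBDinv _)
  have htrace_π : trace ℝ D (π (ellInv BH hBHnd (beta BD π x y))) = 0 :=
    trace_eq_zero_of_skew hBDnd (hπskew _)
  have hsq_symm : ∀ a, BD (π a (π a y)) x = BD (π a (π a x)) y := fun a => by
    rw [hπskew, hπskew, hBDsymm, neg_neg]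
  have htrace_dual :
      trace ℝ _ (betaBilin BD π x ∘ₗ π.flip y ∘ₗ (BH.toDual hBHnd).symm.toLinearMap) =
      -∑ i, ε i * BD (π (bz i) (π (bz i) x)) y := by
    rw [← LinearMap.comp_assoc, LinearMap.trace_comp_comm', trace_toDual_symm_comp hBHnd hε hb,
      ← Finset.sum_neg_distrib]
    simp [betaBilin, beta, hπskew _ (π _ x)]
  rw [trace_eq_of_apply_eq_Rfun hf, hblock]
  simp only [map_add, map_sub, map_smul, smul_eq_mul, htrace_ad, htrace_π,
    LinearMap.trace_comp_comm' (LieAlgebra.ad ℝ D x : D →ₗ[ℝ] D),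
    trace_flip_comp_toDual_symm_comp_betaBilin_flip hε hb, htrace_dual, hsq_symm]
  ring

end Orthonormal

end

theorem ricci_formulas_general
    (BH : LinearMap.BilinForm ℝ H)
    (hBHnd : BH.Nondegenerate)
    (BD : LinearMap.BilinForm ℝ D)
    (hBDsymm : ∀ x y : D, BD x y = BD y x)
    (hBDnd : BD.Nondegenerate)
    (hBDinv : ∀ x y z : D, BD ⁅x, y⁆ z = - BD y ⁅x, z⁆)
    (π : H →ₗ[ℝ] D →ₗ[ℝ] D)
    (hπder : ∀ a : H, ∀ x y : D, π a ⁅x, y⁆ = ⁅π a x, y⁆ + ⁅x, π a y⁆)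
    (hπskew : ∀ a : H, ∀ x y : D, BD (π a x) y = - BD x (π a y))
    -- `Rop u v` is the linear endomorphism `w ↦ R(w,u)v` of G(d)
    (Rop : (D × Dual ℝ H) → (D × Dual ℝ H) → ((D × Dual ℝ H) →ₗ[ℝ] (D × Dual ℝ H)))
    (hRop : ∀ u v w : D × Dual ℝ H, Rop u v w = Rfun BH hBHnd BD π w u v) :
    -- (i) Ric(ℓh₁, ℓh₂) = −¼ tr(π(h₁)π(h₂))
    (∀ h₁ h₂ : H,
      LinearMap.trace ℝ (D × Dual ℝ H) (Rop (0, BH h₁) (0, BH h₂))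
        = -(4⁻¹ : ℝ) * LinearMap.trace ℝ D (π h₁ ∘ₗ π h₂)) ∧
    -- (ii) Ric(x, ℓh) = −¼ tr(π(h) ∘ ad_d(x))
    (∀ (x : D) (h : H),
      LinearMap.trace ℝ (D × Dual ℝ H) (Rop (x, 0) (0, BH h))
        = -(4⁻¹ : ℝ) * LinearMap.trace ℝ D (π h ∘ₗ (LieAlgebra.ad ℝ D x : D →ₗ[ℝ] D))) ∧
    -- (iii) for an orthonormal basis (zᵢ) of h with εᵢ = ⟨zᵢ,zᵢ⟩ = ±1,
    -- Ric(x,y) = ½ Σᵢ εᵢ ⟨π(zᵢ)²x, y⟩_d − ¼ tr(ad_d(x) ∘ ad_d(y))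
    (∀ (n : ℕ) (bz : Basis (Fin n) ℝ H) (ε : Fin n → ℝ),
      (∀ i, ε i = 1 ∨ ε i = -1) →
      (∀ i j, BH (bz i) (bz j) = if i = j then ε i else 0) →
      ∀ x y : D,
        LinearMap.trace ℝ (D × Dual ℝ H) (Rop (x, 0) (y, 0))
          = (2⁻¹ : ℝ) * (∑ i, ε i * BD (π (bz i) (π (bz i) x)) y)
            - (4⁻¹ : ℝ) * LinearMap.trace ℝ D
                ((LieAlgebra.ad ℝ D x : D →ₗ[ℝ] D) ∘ₗ (LieAlgebra.ad ℝ D y : D →ₗ[ℝ] D))) :=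
  ⟨fun _ _ => trace_eq_of_apply_eq_Rfun_ell_ell (hRop _ _),
    fun _ _ => trace_eq_of_apply_eq_Rfun_d_ell hBDnd hBDinv hπder (hRop _ _),
    fun _ _ _ hε hb _ _ =>
      trace_eq_of_apply_eq_Rfun_d_d hBDsymm hBDnd hBDinv hπskew hε hb (hRop _ _)⟩

/-- Formulas for the Ricci tensor `Ric(u,v) = tr(w ↦ R(w,u)v)` of `G(d)`. -/
theorem ricci_formulas
    (BH : LinearMap.BilinForm ℝ H)
    (hBHsymm : ∀ a b : H, BH a b = BH b a)
    (hBHnd : BH.Nondegenerate)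
    (hBHinv : ∀ a b c : H, BH ⁅a, b⁆ c = - BH b ⁅a, c⁆)
    (BD : LinearMap.BilinForm ℝ D)
    (hBDsymm : ∀ x y : D, BD x y = BD y x)
    (hBDnd : BD.Nondegenerate)
    (hBDinv : ∀ x y z : D, BD ⁅x, y⁆ z = - BD y ⁅x, z⁆)
    (π : H →ₗ[ℝ] D →ₗ[ℝ] D)
    (hπder : ∀ a : H, ∀ x y : D, π a ⁅x, y⁆ = ⁅π a x, y⁆ + ⁅x, π a y⁆)
    (hπhom : ∀ a b : H, π ⁅a, b⁆ = π a ∘ₗ π b - π b ∘ₗ π a)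
    (hπskew : ∀ a : H, ∀ x y : D, BD (π a x) y = - BD x (π a y))
    -- `Rop u v` is the linear endomorphism `w ↦ R(w,u)v` of G(d)
    (Rop : (D × Dual ℝ H) → (D × Dual ℝ H) → ((D × Dual ℝ H) →ₗ[ℝ] (D × Dual ℝ H)))
    (hRop : ∀ u v w : D × Dual ℝ H, Rop u v w = Rfun BH hBHnd BD π w u v) :
    -- (i) Ric(ℓh₁, ℓh₂) = −¼ tr(π(h₁)π(h₂))
    (∀ h₁ h₂ : H,
      LinearMap.trace ℝ (D × Dual ℝ H) (Rop (0, BH h₁) (0, BH h₂))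
        = -(4⁻¹ : ℝ) * LinearMap.trace ℝ D (π h₁ ∘ₗ π h₂)) ∧
    -- (ii) Ric(x, ℓh) = −¼ tr(π(h) ∘ ad_d(x))
    (∀ (x : D) (h : H),
      LinearMap.trace ℝ (D × Dual ℝ H) (Rop (x, 0) (0, BH h))
        = -(4⁻¹ : ℝ) * LinearMap.trace ℝ D (π h ∘ₗ (LieAlgebra.ad ℝ D x : D →ₗ[ℝ] D))) ∧
    -- (iii) for an orthonormal basis (zᵢ) of h with εᵢ = ⟨zᵢ,zᵢ⟩ = ±1,
    -- Ric(x,y) = ½ Σᵢ εᵢ ⟨π(zᵢ)²x, y⟩_d − ¼ tr(ad_d(x) ∘ ad_d(y))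
    (∀ (n : ℕ) (bz : Basis (Fin n) ℝ H) (ε : Fin n → ℝ),
      (∀ i, ε i = 1 ∨ ε i = -1) →
      (∀ i j, BH (bz i) (bz j) = if i = j then ε i else 0) →
      ∀ x y : D,
        LinearMap.trace ℝ (D × Dual ℝ H) (Rop (x, 0) (y, 0))
          = (2⁻¹ : ℝ) * (∑ i, ε i * BD (π (bz i) (π (bz i) x)) y)
            - (4⁻¹ : ℝ) * LinearMap.trace ℝ D
                ((LieAlgebra.ad ℝ D x : D →ₗ[ℝ] D) ∘ₗ (LieAlgebra.ad ℝ D y : D →ₗ[ℝ] D))) :=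
  ricci_formulas_general BH hBHnd BD hBDsymm hBDnd hBDinv π hπder hπskew Rop hRop
end
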